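/- arXiv:1401.6711 — 9 statements merged into one kernel-verified Lean document; each statement's English description precedes it below -/
import Mathlib

section
/- Every graph G with m edges contains at most 2^r * binomial(m, r) copies of K_{r,r} (the complete bipartite graph with both parts of size r). In particular, the number of copies is at most 2*m^r. -/
/-!
A copy `(A, B)` of `K_{r,r}` is recovered from any perfect matching between `A` and `B` oriented
from `A` to `B`: `A` and `B` are the tails and the heads of its darts. Such an oriented matching
is an `r`-set of edges of `G` together with one of the two orientations of each edge, so there are
at most `2^r * choose m r` of them. Finally `2^r * choose m r ≤ 2 * r! * choose m r ≤ 2 * m^r`.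
-/

open Finset

theorem Finset.card_filter_injOn_image_eq_le_prod {α β : Type*} [Fintype α] [DecidableEq α]
    [DecidableEq β] (f : α → β) (M : Finset β) :
    #{D : Finset α | Set.InjOn f D ∧ D.image f = M} ≤ ∏ e ∈ M, #{x | f x = e} := by
  rw [← card_pi]
  -- such a `D` is the range of a section of `f` over `M`
  refine card_le_card_of_surjOn (fun g => M.attach.image fun e => g e.1 e.2) ?_
  intro D hD
  simp only [coe_filter, mem_univ, true_and, Set.mem_ofPred_eq] at hD
  obtain ⟨hinj, rfl⟩ := hD
  have hsection : ∀ e ∈ D.image f, ∃ x ∈ D, f x = e := fun e he => by simpa using he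
  choose g hgD hgf using hsection
  refine ⟨g, mem_pi.2 fun e he => by simp [hgf], ?_⟩
  ext x
  constructor
  · intro hx
    obtain ⟨⟨e, he⟩, -, rfl⟩ := mem_image.1 hx
    exact hgD e he
  · intro hx
    exact mem_image.2
      ⟨⟨f x, mem_image_of_mem f hx⟩, mem_attach _ _, hinj (hgD _ _) hx (hgf _ _)⟩

namespace SimpleGraph

variable {V : Type*} (G : SimpleGraph V)

theorem exists_matching_darts_between [DecidableEq V] {A B : Finset V} (hcard : #A = #B)
    (hdisj : Disjoint A B) (hadj : ∀ a ∈ A, ∀ b ∈ B, G.Adj a b) :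
    ∃ D : Finset G.Dart, Set.InjOn Dart.edge (D : Set G.Dart) ∧ #D = #A ∧
      D.image (·.fst) = A ∧ D.image (·.snd) = B := by
  let σ := Finset.equivOfCardEq hcard
  let dart (a : A) : G.Dart := ⟨(a, σ a), hadj _ a.2 _ (σ a).2⟩
  have hdart : Function.Injective dart := fun a a' h =>
    Subtype.ext (congrArg (fun d : G.Dart => d.fst) h)
  refine ⟨A.attach.image dart, ?_, ?_, ?_, ?_⟩
  · simp only [coe_image, Set.InjOn, Set.mem_image, mem_coe, mem_attach, true_and]
    rintro _ ⟨a, rfl⟩ _ ⟨a', rfl⟩ h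
    rcases (G.dart_edge_eq_iff _ _).1 h with h | h
    · exact h
    · have ha : (a : V) = σ a' := congrArg (fun d : G.Dart => d.fst) h
      exact absurd (ha ▸ (σ a').2) (Finset.disjoint_left.1 hdisj a.2)
  · rw [card_image_of_injective _ hdart, card_attach]
  · rw [image_image]; exact attach_image_val
  · rw [image_image]
    ext b
    simp only [mem_image, mem_attach, true_and, Function.comp_apply, dart]
    exact ⟨fun ⟨a, h⟩ => h ▸ (σ a).2, fun hb => ⟨σ.symm ⟨b, hb⟩, by simp⟩⟩

variable [Fintype V] [DecidableEq V] [DecidableRel G.Adj]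

theorem card_filter_injOn_edge_image_eq_le {M : Finset (Sym2 V)} (hM : M ⊆ G.edgeFinset) :
    #{D : Finset G.Dart | Set.InjOn Dart.edge (D : Set G.Dart) ∧ D.image Dart.edge = M} ≤
      2 ^ #M := by
  refine (card_filter_injOn_image_eq_le_prod _ M).trans_eq ?_
  rw [prod_congr rfl fun e he => G.dart_edge_fiber_card e (mem_edgeFinset.1 (hM he)),
    prod_const]

theorem ncard_completeBipartite_copies_le (r : ℕ) :
    {p : Finset V × Finset V |
        #p.1 = r ∧ #p.2 = r ∧ Disjoint p.1 p.2 ∧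
          ∀ a ∈ p.1, ∀ b ∈ p.2, G.Adj a b}.ncard ≤ 2 ^ r * G.edgeSet.ncard.choose r := by
  let matchingDartSets : Finset (Finset G.Dart) :=
    {D | Set.InjOn Dart.edge (D : Set G.Dart) ∧ D.image Dart.edge ∈ G.edgeFinset.powersetCard r}
  have hcopies : {p : Finset V × Finset V |
        #p.1 = r ∧ #p.2 = r ∧ Disjoint p.1 p.2 ∧ ∀ a ∈ p.1, ∀ b ∈ p.2, G.Adj a b} ⊆
      matchingDartSets.image fun D => (D.image (·.fst), D.image (·.snd)) := by
    rintro ⟨A, B⟩ ⟨hA, hB, hdisj, hadj⟩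
    obtain ⟨D, hinj, hD, rfl, rfl⟩ :=
      G.exists_matching_darts_between (hA.trans hB.symm) hdisj hadj
    refine mem_image_of_mem _ (mem_filter.2 ⟨mem_univ _, hinj, mem_powersetCard.2 ⟨?_, ?_⟩⟩)
    · exact image_subset_iff.2 fun d _ => mem_edgeFinset.2 d.edge_mem
    · rw [card_image_iff.2 hinj, hD, hA]
  have hcount : #matchingDartSets ≤ 2 ^ r * G.edgeSet.ncard.choose r := by
    rw [← coe_edgeFinset, Set.ncard_coe_finset, ← card_powersetCard]
    refine card_le_mul_card_image_of_maps_to (fun D hD => (mem_filter.1 hD).2.2) _ fun M hM => ?_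
    obtain ⟨hMG, hMr⟩ := mem_powersetCard.1 hM
    refine (card_le_card fun D hD => ?_).trans (hMr ▸ G.card_filter_injOn_edge_image_eq_le hMG)
    simp only [mem_filter, mem_univ, true_and, matchingDartSets] at hD ⊢
    exact ⟨hD.1.1, hD.2⟩
  calc _ ≤ #(matchingDartSets.image fun D => (D.image (·.fst), D.image (·.snd))) :=
        (Set.ncard_le_ncard hcopies).trans_eq (Set.ncard_coe_finset _)
    _ ≤ #matchingDartSets := card_image_le
    _ ≤ _ := hcount

end SimpleGraph

theorem Nat.two_pow_mul_choose_le_two_mul_pow {r : ℕ} (hr : 1 ≤ r) (m : ℕ) :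
    2 ^ r * m.choose r ≤ 2 * m ^ r := by
  have h2 : 2 ^ r ≤ 2 * r.factorial := by
    obtain ⟨n, rfl⟩ := Nat.exists_eq_add_of_le hr
    simpa [pow_succ', add_comm] using
      Nat.mul_le_mul_left 2 (Nat.factorial_mul_pow_le_factorial (m := 1) (n := n))
  calc 2 ^ r * m.choose r ≤ 2 * (r.factorial * m.choose r) := by
        rw [← mul_assoc]; exact Nat.mul_le_mul_right _ h2
    _ = 2 * m.descFactorial r := by rw [Nat.descFactorial_eq_factorial_mul_choose]
    _ ≤ 2 * m ^ r := Nat.mul_le_mul_left _ (Nat.descFactorial_le_pow m r)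

/-- Every graph `G` with `m` edges contains at most `2^r * choose m r` copies of `K_{r,r}`,
and in particular at most `2 * m^r` copies. A copy is given by an (ordered) pair of disjoint
`r`-sets with all cross edges present. -/
theorem stmt0 {V : Type*} [Fintype V] (G : SimpleGraph V) (r m : ℕ) (hr : 1 ≤ r)
    (hm : G.edgeSet.ncard = m) :
    {p : Finset V × Finset V |
        p.1.card = r ∧ p.2.card = r ∧ Disjoint p.1 p.2 ∧
        ∀ a ∈ p.1, ∀ b ∈ p.2, G.Adj a b}.ncard ≤ 2 ^ r * m.choose r ∧
    {p : Finset V × Finset V |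
        p.1.card = r ∧ p.2.card = r ∧ Disjoint p.1 p.2 ∧
        ∀ a ∈ p.1, ∀ b ∈ p.2, G.Adj a b}.ncard ≤ 2 * m ^ r := by
  classical
  subst hm
  have hcopies := G.ncard_completeBipartite_copies_le r
  exact ⟨hcopies, hcopies.trans (Nat.two_pow_mul_choose_le_two_mul_pow hr _)⟩
end

section
/- For every r >= 2, every graph G with m edges contains a K_{r,r}-free subgraph with at least (1/4) * m^{r/(r+1)} edges. -/
/-!
Alteration method: keep every edge of `G` independently with probability `p`, then delete one
edge from every copy of `K_{r,r}` that survives. There are at most `(2m)^r` copies (a copy is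
determined by a perfect matching between its sides, i.e. by `r` darts), each surviving with
probability `p^{r²}`, so some outcome keeps at least `pm - (2m)^r p^{r²}` edges and no copy.
-/

open Finset

namespace Finset

variable {α ι : Type*}

theorem sum_Icc_pow_mul_pow [DecidableEq α] {R : Type*} [CommSemiring R] {D F : Finset α}
    (h : D ⊆ F) (a b : R) :
    ∑ T ∈ Icc D F, a ^ #T * b ^ (#F - #T) = a ^ #D * (a + b) ^ (#F - #D) := by
  rw [Icc_eq_image_powerset h, sum_image, ← card_sdiff_of_subset h, ← sum_pow_mul_eq_add_pow,
    mul_sum]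
  · refine sum_congr rfl fun U hU => ?_
    have hUF := mem_powerset.1 hU
    have hdisj : Disjoint D U := disjoint_of_subset_right hUF disjoint_sdiff
    have hcard := card_le_card hUF
    rw [card_sdiff_of_subset h] at hcard ⊢
    rw [card_union_of_disjoint hdisj, pow_add, mul_assoc]
    congr 3
    omega
  · intro U hU U' hU' hUU'
    have hd := disjoint_of_subset_right (mem_powerset.1 hU) disjoint_sdiff
    have hd' := disjoint_of_subset_right (mem_powerset.1 hU') disjoint_sdiff
    rw [← union_sdiff_cancel_left hd, ← union_sdiff_cancel_left hd']
    exact congrArg (· \ D) hUU'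

theorem exists_sum_mul_le {s : Finset ι} {w f : ι → ℝ} (hw₀ : ∀ i ∈ s, 0 ≤ w i)
    (hw₁ : ∑ i ∈ s, w i = 1) : ∃ i ∈ s, ∑ j ∈ s, w j * f j ≤ f i := by
  obtain ⟨i, hi, hmax⟩ := s.exists_max_image f (nonempty_of_sum_ne_zero (hw₁ ▸ one_ne_zero))
  refine ⟨i, hi, ?_⟩
  calc ∑ j ∈ s, w j * f j ≤ ∑ j ∈ s, w j * f i :=
        sum_le_sum fun j hj => mul_le_mul_of_nonneg_left (hmax j hj) (hw₀ j hj)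
    _ = f i := by rw [← sum_mul, hw₁, one_mul]

theorem exists_subset_forall_not_subset_card_le_add [DecidableEq α] (S : Finset α) {s : Finset ι}
    {f : ι → Finset α} (hf : ∀ i ∈ s, (f i).Nonempty) :
    ∃ T ⊆ S, (∀ i ∈ s, ¬ f i ⊆ T) ∧ #S ≤ #T + #{i ∈ s | f i ⊆ S} := by
  choose x hx using hf
  set D := {i ∈ s | f i ⊆ S}.attach.image fun i => x i.1 (mem_filter.1 i.2).1
  refine ⟨S \ D, sdiff_subset, fun i hi hiT => ?_, ?_⟩
  · have hxD : x i hi ∈ D :=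
      mem_image.2 ⟨⟨i, mem_filter.2 ⟨hi, hiT.trans sdiff_subset⟩⟩, mem_attach _ _, rfl⟩
    exact (mem_sdiff.1 (hiT (hx i hi))).2 hxD
  · exact card_le_card_sdiff_add_card.trans
      (Nat.add_le_add_left (card_image_le.trans card_attach.le) #(S \ D))

/-- The probability that a random subset of `F`, containing each element independently with
probability `p`, is `T`. -/
def bernoulliWeight (p : ℝ) (F T : Finset α) : ℝ := p ^ #T * (1 - p) ^ (#F - #T)

section bernoulliWeight

variable {p : ℝ} {F : Finset α}

theorem bernoulliWeight_nonneg (hp₀ : 0 ≤ p) (hp₁ : p ≤ 1) (T : Finset α) :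
    0 ≤ bernoulliWeight p F T :=
  mul_nonneg (pow_nonneg hp₀ _) (pow_nonneg (sub_nonneg.2 hp₁) _)

theorem sum_bernoulliWeight : ∑ T ∈ F.powerset, bernoulliWeight p F T = 1 := by
  simp [bernoulliWeight, sum_pow_mul_eq_add_pow]

theorem sum_bernoulliWeight_Icc [DecidableEq α] {D : Finset α} (h : D ⊆ F) :
    ∑ T ∈ Icc D F, bernoulliWeight p F T = p ^ #D := by
  simp [bernoulliWeight, sum_Icc_pow_mul_pow h]

theorem sum_bernoulliWeight_mul_card_filter_subset [DecidableEq α] {s : Finset ι}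
    {f : ι → Finset α} (hf : ∀ i ∈ s, f i ⊆ F) :
    ∑ T ∈ F.powerset, bernoulliWeight p F T * #{i ∈ s | f i ⊆ T} =
      ∑ i ∈ s, p ^ #(f i) := by
  simp_rw [card_filter, Nat.cast_sum, mul_sum]
  rw [sum_comm]
  refine sum_congr rfl fun i hi => ?_
  rw [← sum_bernoulliWeight_Icc (hf i hi), Icc_eq_filter_powerset, sum_filter]
  simp

theorem sum_bernoulliWeight_mul_card [DecidableEq α] :
    ∑ T ∈ F.powerset, bernoulliWeight p F T * #T = p * #F := by
  have h := sum_bernoulliWeight_mul_card_filter_subset (p := p) (s := F) (f := singleton)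
    fun e he => singleton_subset_iff.2 he
  simp only [pow_one, card_singleton, sum_const, nsmul_eq_mul] at h
  rw [mul_comm, ← h]
  refine sum_congr rfl fun T hT => ?_
  rw [filter_congr fun e _ => singleton_subset_iff, filter_mem_eq_inter,
    inter_eq_right.2 (mem_powerset.1 hT)]

end bernoulliWeight

theorem exists_subset_forall_not_subset_le_card [DecidableEq α] (F : Finset α) {s : Finset ι}
    {f : ι → Finset α} (hfF : ∀ i ∈ s, f i ⊆ F) (hf : ∀ i ∈ s, (f i).Nonempty)
    {p : ℝ} (hp₀ : 0 ≤ p) (hp₁ : p ≤ 1) :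
    ∃ T ⊆ F, (∀ i ∈ s, ¬ f i ⊆ T) ∧ p * #F - ∑ i ∈ s, p ^ #(f i) ≤ #T := by
  obtain ⟨U, hUF, hU⟩ := exists_sum_mul_le (f := fun U => (#U : ℝ) - #{i ∈ s | f i ⊆ U})
    (fun T _ => bernoulliWeight_nonneg hp₀ hp₁ (F := F) T) sum_bernoulliWeight
  obtain ⟨T, hTU, hT, hcard⟩ := exists_subset_forall_not_subset_card_le_add U hf
  refine ⟨T, hTU.trans (mem_powerset.1 hUF), hT, ?_⟩
  simp only [mul_sub, sum_sub_distrib, sum_bernoulliWeight_mul_card,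
    sum_bernoulliWeight_mul_card_filter_subset hfF] at hU
  have : (#U : ℝ) ≤ #T + #{i ∈ s | f i ⊆ U} := by exact_mod_cast hcard
  linarith

theorem exists_fin_image_univ_eq [DecidableEq α] {s : Finset α} {r : ℕ}
    (h : #s = r) : ∃ e : Fin r → α, univ.image e = s := by
  subst h
  refine ⟨fun i => s.equivFin.symm i, ?_⟩
  ext v
  simp only [mem_image, mem_univ, true_and]
  exact ⟨by rintro ⟨i, rfl⟩; exact (s.equivFin.symm i).2,
    fun hv => ⟨s.equivFin ⟨v, hv⟩, by simp⟩⟩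

theorem card_image₂_sym2Mk [DecidableEq α] {A B : Finset α}
    (h : Disjoint A B) : #(image₂ Sym2.mk A B) = #A * #B := by
  refine card_image₂_iff.2 ?_
  rintro ⟨a, b⟩ hab ⟨a', b'⟩ hab' heq
  simp only [Set.mem_prod, mem_coe] at hab hab'
  rcases Sym2.eq_iff.1 heq with ⟨rfl, rfl⟩ | ⟨rfl, rfl⟩
  · rfl
  · exact (disjoint_left.1 h hab.1 hab'.2).elim

end Finset

namespace SimpleGraph

variable {V : Type*} (G : SimpleGraph V)

def completeBipartitePairs [Fintype V] [DecidableEq V] [DecidableRel G.Adj] (r : ℕ) :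
    Finset (Finset V × Finset V) :=
  {c | #c.1 = r ∧ #c.2 = r ∧ Disjoint c.1 c.2 ∧ ∀ a ∈ c.1, ∀ b ∈ c.2, G.Adj a b}

theorem card_completeBipartitePairs_le [Fintype V] [DecidableEq V] [DecidableRel G.Adj] (r : ℕ) :
    #(G.completeBipartitePairs r) ≤ (2 * #G.edgeFinset) ^ r := by
  -- a copy is determined by the `r` darts of a perfect matching between its two sides
  let spanned : (Fin r → G.Dart) → Finset V × Finset V :=
    fun d => (univ.image fun i => (d i).fst, univ.image fun i => (d i).snd)
  have hK : G.completeBipartitePairs r ⊆ univ.image spanned := by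
    intro c hc
    obtain ⟨hA, hB, -, hadj⟩ := (mem_filter.1 hc).2
    obtain ⟨eA, heA⟩ := exists_fin_image_univ_eq hA
    obtain ⟨eB, heB⟩ := exists_fin_image_univ_eq hB
    have hmem (i : Fin r) : G.Adj (eA i) (eB i) :=
      hadj _ (heA ▸ mem_image_of_mem eA (mem_univ i)) _ (heB ▸ mem_image_of_mem eB (mem_univ i))
    exact mem_image.2 ⟨fun i => ⟨(eA i, eB i), hmem i⟩, mem_univ _, Prod.ext heA heB⟩
  calc #(G.completeBipartitePairs r) ≤ #(univ.image spanned) := card_le_card hK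
    _ ≤ Fintype.card (Fin r → G.Dart) := card_image_le
    _ = (2 * #G.edgeFinset) ^ r := by simp [dart_card_eq_twice_card_edges]

section completeBipartitePairs

variable [Fintype V] [DecidableEq V] [DecidableRel G.Adj] {r : ℕ} {c : Finset V × Finset V}

theorem image₂_sym2Mk_subset_edgeFinset (hc : c ∈ G.completeBipartitePairs r) :
    image₂ Sym2.mk c.1 c.2 ⊆ G.edgeFinset := by
  intro e he
  obtain ⟨a, ha, b, hb, rfl⟩ := mem_image₂.1 he
  exact mem_edgeFinset.2 ((mem_filter.1 hc).2.2.2.2 a ha b hb)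

theorem card_image₂_sym2Mk_of_mem_completeBipartitePairs (hc : c ∈ G.completeBipartitePairs r) :
    #(image₂ Sym2.mk c.1 c.2) = r * r := by
  obtain ⟨hA, hB, hAB, -⟩ := (mem_filter.1 hc).2
  rw [card_image₂_sym2Mk hAB, hA, hB]

theorem not_exists_complete_fromEdgeSet {T : Finset (Sym2 V)}
    (hTG : (T : Set (Sym2 V)) ⊆ G.edgeSet)
    (hT : ∀ c ∈ G.completeBipartitePairs r, ¬ image₂ Sym2.mk c.1 c.2 ⊆ T) :
    ¬ ∃ A B : Finset V, #A = r ∧ #B = r ∧ Disjoint A B ∧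
      ∀ a ∈ A, ∀ b ∈ B, (fromEdgeSet (T : Set (Sym2 V))).Adj a b := by
  rintro ⟨A, B, hA, hB, hAB, hadj⟩
  have hmem : ∀ a ∈ A, ∀ b ∈ B, s(a, b) ∈ T := fun a ha b hb => (hadj a ha b hb).1
  refine hT (A, B) (mem_filter.2 ⟨mem_univ _, hA, hB, hAB, fun a ha b hb => ?_⟩) ?_
  · exact hTG (hmem a ha b hb)
  · intro e he
    obtain ⟨a, ha, b, hb, rfl⟩ := mem_image₂.1 he
    exact hmem a ha b hb

end completeBipartitePairs

theorem edgeSet_fromEdgeSet_of_subset {s : Set (Sym2 V)} (h : s ⊆ G.edgeSet) :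
    (fromEdgeSet s).edgeSet = s := by
  rw [edgeSet_fromEdgeSet, sdiff_eq_left, ← Set.subset_compl_iff_disjoint_right]
  exact h.trans G.edgeSet_subset_compl_diagSet

end SimpleGraph

theorem quarter_mul_pow_le {r : ℕ} (hr : 2 ≤ r) {y : ℝ} (hy : 0 < y) :
    1 / 4 * y ^ r ≤ 2 / 5 / y * y ^ (r + 1) - (2 * y ^ (r + 1)) ^ r * (2 / 5 / y) ^ (r * r) := by
  have hlin : 2 / 5 / y * y ^ (r + 1) = 2 / 5 * y ^ r := by field_simp; ring
  have hdel : (2 * y ^ (r + 1)) ^ r * (2 / 5 / y) ^ (r * r) = (2 * (2 / 5) ^ r) ^ r * y ^ r := by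
    rw [div_pow, mul_pow, ← pow_mul, show (r + 1) * r = r * r + r by ring, pow_add]
    field_simp
    ring
  have hconst : (2 * (2 / 5 : ℝ) ^ r) ^ r ≤ 3 / 20 := by
    have hbase : 2 * (2 / 5 : ℝ) ^ r ≤ 8 / 25 := by
      nlinarith [pow_le_pow_of_le_one (by norm_num : (0 : ℝ) ≤ 2 / 5) (by norm_num) hr]
    calc (2 * (2 / 5 : ℝ) ^ r) ^ r ≤ (2 * (2 / 5 : ℝ) ^ r) ^ 2 :=
          pow_le_pow_of_le_one (by positivity) (by linarith) hr
      _ ≤ (8 / 25) ^ 2 := pow_le_pow_left₀ (by positivity) hbase 2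
      _ ≤ 3 / 20 := by norm_num
  rw [hlin, hdel]
  nlinarith [pow_pos hy r]

theorem exists_prob_quarter_rpow_le (r m : ℕ) (hr : 2 ≤ r) :
    ∃ p : ℝ, 0 ≤ p ∧ p ≤ 1 ∧
      1 / 4 * (m : ℝ) ^ ((r : ℝ) / (r + 1)) ≤ p * m - (2 * m) ^ r * p ^ (r * r) := by
  rcases m.eq_zero_or_pos with rfl | hm
  · refine ⟨0, le_rfl, zero_le_one, ?_⟩
    simp [Real.zero_rpow (by positivity : (r : ℝ) / (r + 1) ≠ 0), zero_pow (by omega : r ≠ 0)]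
  -- with `p = (2/5) m^{-1/(r+1)}` both terms are constant multiples of `m^{r/(r+1)}`
  set y := (m : ℝ) ^ ((1 : ℝ) / (r + 1))
  have hy : 1 ≤ y := Real.one_le_rpow (by exact_mod_cast hm) (by positivity)
  have hym : y ^ (r + 1) = m := by
    rw [← Real.rpow_natCast, ← Real.rpow_mul (Nat.cast_nonneg m)]
    push_cast
    rw [one_div_mul_cancel (by positivity), Real.rpow_one]
  have hyr : y ^ r = (m : ℝ) ^ ((r : ℝ) / (r + 1)) := by
    rw [← Real.rpow_natCast, ← Real.rpow_mul (Nat.cast_nonneg m), one_div_mul_eq_div]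
  refine ⟨2 / 5 / y, by positivity, div_le_one_of_le₀ (by linarith) (by linarith), ?_⟩
  rw [← hyr, ← hym]
  exact quarter_mul_pow_le hr (by linarith)

/-- For `r ≥ 2`, every graph `G` with `m` edges has a `K_{r,r}`-free (spanning) subgraph
with at least `(1/4) * m^(r/(r+1))` edges. -/
theorem stmt3 {V : Type*} [Fintype V] (G : SimpleGraph V) (r m : ℕ) (hr : 2 ≤ r)
    (hm : G.edgeSet.ncard = m) :
    ∃ H : SimpleGraph V, H ≤ G ∧
      (¬ ∃ A B : Finset V, A.card = r ∧ B.card = r ∧ Disjoint A B ∧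
        ∀ a ∈ A, ∀ b ∈ B, H.Adj a b) ∧
      (H.edgeSet.ncard : ℝ) ≥ (1 / 4) * (m : ℝ) ^ ((r : ℝ) / (r + 1)) := by
  classical
  obtain ⟨p, hp₀, hp₁, hp⟩ := exists_prob_quarter_rpow_le r m hr
  obtain ⟨T, hTE, hTK, hT⟩ := exists_subset_forall_not_subset_le_card G.edgeFinset
    (fun c hc => G.image₂_sym2Mk_subset_edgeFinset hc)
    (fun c hc => card_pos.1 <| by
      rw [G.card_image₂_sym2Mk_of_mem_completeBipartitePairs hc]; positivity) hp₀ hp₁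
  have hTG : (T : Set (Sym2 V)) ⊆ G.edgeSet := by simpa [← coe_subset] using hTE
  refine ⟨SimpleGraph.fromEdgeSet T,
    (SimpleGraph.fromEdgeSet_le G).2 (Set.sdiff_subset.trans hTG),
    G.not_exists_complete_fromEdgeSet hTG hTK, ?_⟩
  have hm' : #G.edgeFinset = m := by
    rw [← hm, ← Set.ncard_coe_finset, SimpleGraph.coe_edgeFinset]
  have hcopies : ∑ c ∈ G.completeBipartitePairs r, p ^ #(image₂ Sym2.mk c.1 c.2) ≤
      (2 * m) ^ r * p ^ (r * r) := by
    rw [sum_congr rfl fun c hc => by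
      rw [G.card_image₂_sym2Mk_of_mem_completeBipartitePairs hc], sum_const, nsmul_eq_mul]
    gcongr
    exact_mod_cast hm' ▸ G.card_completeBipartitePairs_le r
  rw [G.edgeSet_fromEdgeSet_of_subset hTG, Set.ncard_coe_finset]
  rw [hm'] at hT
  linarith
end

section
/- Let 2 <= r <= s and let G be the complete bipartite graph with parts U and W where |U| = m^{1/(r+1)} and |W| = m^{r/(r+1)} (assume m^{1/(r+1)} is an integer). Then G has m edges, and every K_{r,s}-free subgraph of G has at most s * m^{r/(r+1)} edges. -/
/-!
If every `b ∈ W` has `d b` neighbours in `U`, the pairs `(b, A)` with `A` an `r`-subset of the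
neighbourhood of `b` number `∑ b, (d b).choose r`; since no `r`-set `A` has `s` common neighbours
this is at most `(s - 1) * |U|.choose r`, which is at most `|W| * s.choose r` once `|U| ^ r ≤ |W|`. Convexity of `d ↦ d.choose r`, in the form of its
tangent line at `d = s`, then turns this into `∑ b, d b ≤ s * |W|`.
-/

open Finset

/-- The convex sequence `d ↦ d.choose (k + 1)` lies above its tangent line at `d = s`, of slope
`s.choose k`. -/
theorem Nat.choose_succ_add_mul_le (s k d : ℕ) :
    s.choose (k + 1) + d * s.choose k ≤ d.choose (k + 1) + s * s.choose k := by
  rcases le_total s d with hsd | hds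
  · induction d, hsd using Nat.le_induction with
    | base => rfl
    | succ n hsn ih =>
      have := Nat.choose_le_choose k hsn
      rw [Nat.choose_succ_succ', add_one_mul]
      omega
  · induction hds using Nat.decreasingInduction with
    | self => rfl
    | of_succ n hns ih =>
      have := Nat.choose_le_choose k hns.le
      rw [Nat.choose_succ_succ', add_one_mul] at ih
      omega

theorem sum_le_card_mul_of_sum_choose_le {ι : Type*} (S : Finset ι) (d : ι → ℕ) {k s : ℕ}
    (hks : k ≤ s) (h : ∑ i ∈ S, (d i).choose (k + 1) ≤ #S * s.choose (k + 1)) :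
    ∑ i ∈ S, d i ≤ #S * s := by
  have tangent := sum_le_sum fun i (_ : i ∈ S) => Nat.choose_succ_add_mul_le s k (d i)
  simp only [sum_add_distrib, sum_const, smul_eq_mul, ← sum_mul] at tangent
  refine Nat.le_of_mul_le_mul_right ?_ (Nat.choose_pos hks)
  nlinarith

theorem sub_one_mul_choose_le_pow_mul_choose {r s : ℕ} (t : ℕ) (hr : 1 ≤ r) (hrs : r ≤ s) :
    (s - 1) * t.choose r ≤ t ^ r * s.choose r := by
  have hs : s - 1 ≤ s.descFactorial r := by
    obtain ⟨s, rfl⟩ := Nat.exists_eq_add_of_le' (hr.trans hrs)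
    obtain ⟨k, rfl⟩ := Nat.exists_eq_add_of_le' hr
    rw [Nat.succ_descFactorial_succ]
    have := Nat.descFactorial_pos.2 (Nat.le_of_succ_le_succ hrs)
    rw [Nat.add_sub_cancel]
    exact Nat.le_mul_of_pos_right _ this |>.trans' (Nat.le_succ s)
  refine Nat.le_of_mul_le_mul_left ?_ r.factorial_pos
  calc r.factorial * ((s - 1) * t.choose r) = (s - 1) * t.descFactorial r := by
        rw [Nat.descFactorial_eq_factorial_mul_choose]; ring
    _ ≤ s.descFactorial r * t ^ r := Nat.mul_le_mul hs (t.descFactorial_le_pow r)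
    _ = r.factorial * (t ^ r * s.choose r) := by
        rw [Nat.descFactorial_eq_factorial_mul_choose]; ring

section KovariSosTuran

variable {α β : Type*} [Fintype α] [Fintype β] (R : α → β → Prop) [DecidableRel R]
  {r s : ℕ}

theorem sum_choose_card_filter_le
    (hfree : ¬ ∃ (A : Finset α) (B : Finset β), #A = r ∧ #B = s ∧ ∀ a ∈ A, ∀ b ∈ B, R a b) :
    ∑ b, (#{a | R a b}).choose r ≤ (s - 1) * (Fintype.card α).choose r := by
  have hcommon : ∀ A ∈ powersetCard r (univ : Finset α), #{b | ∀ a ∈ A, R a b} ≤ s - 1 := by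
    intro A hA
    by_contra! hs
    obtain ⟨B, hB, hBs⟩ := exists_subset_card_eq (show s ≤ #{b | ∀ a ∈ A, R a b} by omega)
    refine hfree ⟨A, B, (mem_powersetCard.1 hA).2, hBs, fun a ha b hb => ?_⟩
    exact (mem_filter.1 (hB hb)).2 a ha
  calc ∑ b, (#{a | R a b}).choose r
      = ∑ b, #((powersetCard r univ).filter fun A => ∀ a ∈ A, R a b) := by
        refine sum_congr rfl fun b _ => ?_
        rw [← card_powersetCard]
        congr 1
        ext A
        simp [mem_powersetCard, subset_iff, and_comm]
    _ = ∑ A ∈ powersetCard r univ, #{b | ∀ a ∈ A, R a b} :=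
        sum_card_bipartiteAbove_eq_sum_card_bipartiteBelow _
    _ ≤ #(powersetCard r (univ : Finset α)) * (s - 1) := sum_le_card_nsmul _ _ _ hcommon
    _ = (s - 1) * (Fintype.card α).choose r := by rw [card_powersetCard, card_univ, mul_comm]

theorem card_filter_le_mul_card_of_not_exists (hr : 1 ≤ r) (hrs : r ≤ s)
    (hcard : Fintype.card α ^ r ≤ Fintype.card β)
    (hfree : ¬ ∃ (A : Finset α) (B : Finset β), #A = r ∧ #B = s ∧ ∀ a ∈ A, ∀ b ∈ B, R a b) :
    #{p : α × β | R p.1 p.2} ≤ s * Fintype.card β := by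
  obtain ⟨k, rfl⟩ := Nat.exists_eq_add_of_le' hr
  have hdegrees : #{p : α × β | R p.1 p.2} = ∑ b, #{a | R a b} := by
    simp only [card_filter]
    exact Fintype.sum_prod_type_right _
  have hchoose : ∑ b, (#{a | R a b}).choose (k + 1) ≤ #(univ : Finset β) * s.choose (k + 1) :=
    calc ∑ b, (#{a | R a b}).choose (k + 1)
        ≤ (s - 1) * (Fintype.card α).choose (k + 1) := sum_choose_card_filter_le R hfree
      _ ≤ Fintype.card α ^ (k + 1) * s.choose (k + 1) :=
          sub_one_mul_choose_le_pow_mul_choose _ hr hrs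
      _ ≤ #(univ : Finset β) * s.choose (k + 1) := by rw [card_univ]; gcongr
  rw [hdegrees, mul_comm, ← card_univ]
  exact sum_le_card_mul_of_sum_choose_le _ _ (by omega) hchoose

end KovariSosTuran

theorem SimpleGraph.ncard_edgeSet_eq_card_adj_inl_inr {α β : Type*} [Fintype α] [Fintype β]
    (H : SimpleGraph (α ⊕ β)) [DecidableRel H.Adj] (hH : H ≤ completeBipartiteGraph α β) :
    H.edgeSet.ncard = #{p : α × β | H.Adj (.inl p.1) (.inr p.2)} := by
  have hedges : H.edgeSet =
      (fun p : α × β => s(.inl p.1, .inr p.2)) '' {p | H.Adj (.inl p.1) (.inr p.2)} := by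
    refine Set.ext <| Sym2.ind fun u v => ?_
    have := @hH u v
    cases u <;> cases v <;> simp_all [H.adj_comm]
  rw [hedges, Set.ncard_image_of_injective _ (by grind [Function.Injective]),
    ← Set.ncard_coe_finset]
  simp

/-- The complete bipartite graph with parts of sizes `t = m^(1/(r+1))` and `t^r = m^(r/(r+1))`
has `m = t^(r+1)` edges, and every `K_{r,s}`-free subgraph of it (with the `r`-side in `U`
and the `s`-side in `W`) has at most `s * m^(r/(r+1)) = s * t^r` edges. -/
theorem stmt4 (r s t m : ℕ) (hr : 2 ≤ r) (hrs : r ≤ s) (hm : m = t ^ (r + 1)) :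
    (completeBipartiteGraph (Fin t) (Fin (t ^ r))).edgeSet.ncard = m ∧
    ∀ H : SimpleGraph (Fin t ⊕ Fin (t ^ r)),
      H ≤ completeBipartiteGraph (Fin t) (Fin (t ^ r)) →
      (¬ ∃ (A : Finset (Fin t)) (B : Finset (Fin (t ^ r))),
        A.card = r ∧ B.card = s ∧ ∀ a ∈ A, ∀ b ∈ B, H.Adj (Sum.inl a) (Sum.inr b)) →
      H.edgeSet.ncard ≤ s * t ^ r := by
  classical
  refine ⟨?_, fun H hH hfree => ?_⟩
  · rw [SimpleGraph.ncard_edgeSet_eq_card_adj_inl_inr _ le_rfl, hm]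
    simp [pow_succ']
  · rw [SimpleGraph.ncard_edgeSet_eq_card_adj_inl_inr H hH]
    simpa using card_filter_le_mul_card_of_not_exists (fun a b => H.Adj (.inl a) (.inr b))
      (by omega) hrs (by simp) hfree
end

section
/- Let G' be a bipartite graph with parts U and W that contains no copy of K_{r,s} with r vertices in U and s vertices in W (r <= s). Then sum over w in W of binomial(deg(w), r) is at most (s-1) * binomial(|U|, r). -/
/-!
Count the pairs `(R, w)` with `R` an `r`-subset of `U` and `w ∈ W` adjacent to all of `R`.
Grouped by `w`, there are `C(deg w, r)` of them; grouped by `R`, each `R` has fewer than `s`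
common neighbours, since otherwise `s` of them together with `R` would span a `K_{r,s}`.
-/

open Finset

namespace KovariSosTuran

variable {U W : Type*} (E : U → W → Prop) [∀ u w, Decidable (E u w)]

def neighbors [Fintype U] (w : W) : Finset U := univ.filter fun u => E u w

def commonNeighbors [Fintype W] (R : Finset U) : Finset W := univ.filter fun w => ∀ u ∈ R, E u w

theorem filter_powersetCard_univ_eq_powersetCard_neighbors [Fintype U] (r : ℕ) (w : W) :
    (powersetCard r univ).filter (fun R => ∀ u ∈ R, E u w) = powersetCard r (neighbors E w) := by
  ext R
  simp [neighbors, mem_powersetCard, subset_iff, and_comm]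

theorem sum_choose_card_neighbors_eq_sum_card_commonNeighbors [Fintype U] [Fintype W] (r : ℕ) :
    ∑ w, (neighbors E w).card.choose r =
      ∑ R ∈ powersetCard r univ, (commonNeighbors E R).card := by
  have := sum_card_bipartiteAbove_eq_sum_card_bipartiteBelow
    (s := powersetCard r (univ : Finset U)) (t := (univ : Finset W))
    (r := fun R w => ∀ u ∈ R, E u w)
  simp only [bipartiteAbove, bipartiteBelow, filter_powersetCard_univ_eq_powersetCard_neighbors,
    card_powersetCard] at this
  exact this.symm

theorem card_commonNeighbors_lt [Fintype W] {r s : ℕ}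
    (hfree : ¬ ∃ (R : Finset U) (S : Finset W), R.card = r ∧ S.card = s ∧
      ∀ u ∈ R, ∀ w ∈ S, E u w)
    {R : Finset U} (hR : R.card = r) : (commonNeighbors E R).card < s := by
  by_contra! hs
  obtain ⟨S, hS, hScard⟩ := exists_subset_card_eq hs
  exact hfree ⟨R, S, hR, hScard, fun u hu w hw => (mem_filter.mp (hS hw)).2 u hu⟩

end KovariSosTuran

open KovariSosTuran in
theorem stmt5_general {U W : Type*} [Fintype U] [Fintype W] (r s : ℕ)
    (E : U → W → Prop) [∀ u w, Decidable (E u w)]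
    (hfree : ¬ ∃ (R : Finset U) (S : Finset W), R.card = r ∧ S.card = s ∧
      ∀ u ∈ R, ∀ w ∈ S, E u w) :
    ∑ w : W, ((Finset.univ.filter fun u => E u w).card.choose r) ≤
      (s - 1) * (Fintype.card U).choose r := by
  calc ∑ w, (neighbors E w).card.choose r
      = ∑ R ∈ powersetCard r univ, (commonNeighbors E R).card :=
        sum_choose_card_neighbors_eq_sum_card_commonNeighbors E r
    _ ≤ ∑ _R ∈ powersetCard r (univ : Finset U), (s - 1) := sum_le_sum fun R hR =>
        Nat.le_sub_one_of_lt (card_commonNeighbors_lt E hfree (mem_powersetCard.mp hR).2)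
    _ = (s - 1) * (Fintype.card U).choose r := by
        rw [sum_const, card_powersetCard, card_univ, smul_eq_mul, mul_comm]

/-- Kővári–Sós–Turán double counting: if a bipartite graph (given by the adjacency relation
`E` between parts `U` and `W`) has no `K_{r,s}` with the `r`-side in `U` and the `s`-side in
`W`, then `∑_{w ∈ W} C(deg w, r) ≤ (s-1) * C(|U|, r)`. -/
theorem stmt5 {U W : Type*} [Fintype U] [Fintype W] (r s : ℕ) (hrs : r ≤ s) (hs : 1 ≤ s)
    (E : U → W → Prop) [∀ u w, Decidable (E u w)]
    (hfree : ¬ ∃ (R : Finset U) (S : Finset W), R.card = r ∧ S.card = s ∧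
      ∀ u ∈ R, ∀ w ∈ S, E u w) :
    ∑ w : W, ((Finset.univ.filter fun u => E u w).card.choose r) ≤
      (s - 1) * (Fintype.card U).choose r :=
  stmt5_general r s E hfree
end

section
/- For k, r >= 2 and q = (r^k - 1)/(r - 1), every k-uniform hypergraph G with m edges contains a K^{(k)}_{r,...,r}-free subhypergraph with at least (1/4) * m^{(q-1)/q} edges. -/
/-!
Deletion method. Keep every edge of `G` independently with probability `p = m^(-1/q) / 2`.
A copy of `K^(k)_{r,…,r}` has `r^k` edges, and `G` contains at most `(m k!)^r` copies, since a
copy is determined by `r` pairwise disjoint ordered edges of `G` (its transversals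
`i ↦ (j-th vertex of part i)`). So some choice keeps at least `p m - (m k!)^r p^(r^k)` more edges
than copies, and deleting one edge from each surviving copy leaves a `K^(k)_{r,…,r}`-free
subhypergraph of that size. As `q (r - 1) = r^k - 1`, both terms are multiples of
`m^((q-1)/q)`, and `4 k!^r ≤ 2^(r^k)` makes the bound at least `m^((q-1)/q) / 4`.
-/

open Finset
open scoped Nat

namespace Finset

variable {E : Type*}

/-- The probability that the random subset of `H` keeping each element independently with
probability `p` equals `S` (for `S ⊆ H`). -/
def binomialWeight (p : ℝ) (H S : Finset E) : ℝ := p ^ #S * (1 - p) ^ (#H - #S)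

lemma binomialWeight_nonneg {p : ℝ} (hp0 : 0 ≤ p) (hp1 : p ≤ 1) (H S : Finset E) :
    0 ≤ binomialWeight p H S :=
  mul_nonneg (pow_nonneg hp0 _) (pow_nonneg (sub_nonneg.2 hp1) _)

lemma sum_binomialWeight (p : ℝ) (H : Finset E) :
    ∑ S ∈ H.powerset, binomialWeight p H S = 1 := by
  simp [binomialWeight, sum_pow_mul_eq_add_pow]

variable [DecidableEq E]

lemma binomialWeight_union {p : ℝ} {A H U : Finset E} (hAH : A ⊆ H) (hU : U ⊆ H \ A) :
    binomialWeight p H (A ∪ U) = p ^ #A * binomialWeight p (H \ A) U := by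
  have hdisj : Disjoint A U := disjoint_of_subset_right hU disjoint_sdiff
  have hUH : #U ≤ #(H \ A) := card_le_card hU
  rw [binomialWeight, binomialWeight, card_union_of_disjoint hdisj, card_sdiff_of_subset hAH,
    pow_add, mul_assoc]
  congr 3
  have := card_le_card hAH
  omega

lemma sum_binomialWeight_Icc (p : ℝ) {A H : Finset E} (hAH : A ⊆ H) :
    ∑ S ∈ Icc A H, binomialWeight p H S = p ^ #A := by
  have hinj : Set.InjOn (A ∪ ·) (H \ A).powerset := fun U hU U' hU' hUU' => by
    simp only [coe_powerset, Set.mem_preimage, Set.mem_powerset_iff, coe_subset] at hU hU'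
    simp only at hUU'
    rw [← union_sdiff_cancel_left (disjoint_of_subset_right hU disjoint_sdiff), hUU',
      union_sdiff_cancel_left (disjoint_of_subset_right hU' disjoint_sdiff)]
  rw [Icc_eq_image_powerset hAH, sum_image hinj,
    sum_congr rfl fun U hU => binomialWeight_union hAH (mem_powerset.1 hU), ← mul_sum,
    sum_binomialWeight, mul_one]

lemma sum_binomialWeight_mul_card_filter_subset (p : ℝ) {H : Finset E} {𝒜 : Finset (Finset E)}
    (h𝒜 : ∀ A ∈ 𝒜, A ⊆ H) :
    ∑ S ∈ H.powerset, binomialWeight p H S * #{A ∈ 𝒜 | A ⊆ S} = ∑ A ∈ 𝒜, p ^ #A := by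
  simp_rw [card_filter, Nat.cast_sum, mul_sum]
  rw [sum_comm]
  refine sum_congr rfl fun A hA => ?_
  rw [← sum_binomialWeight_Icc p (h𝒜 A hA), Icc_eq_filter_powerset, sum_filter]
  refine sum_congr rfl fun S _ => ?_
  split_ifs <;> simp

lemma sum_binomialWeight_mul_card (p : ℝ) (H : Finset E) :
    ∑ S ∈ H.powerset, binomialWeight p H S * #S = p * #H := by
  have hfilter : ∀ S ∈ H.powerset, {A ∈ H.powersetCard 1 | A ⊆ S} = S.powersetCard 1 := by
    intro S hS
    ext A
    simp only [mem_filter, mem_powersetCard]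
    exact ⟨fun h => ⟨h.2, h.1.2⟩, fun h => ⟨⟨h.1.trans (mem_powerset.1 hS), h.2⟩, h.1⟩⟩
  calc ∑ S ∈ H.powerset, binomialWeight p H S * #S
      = ∑ S ∈ H.powerset, binomialWeight p H S * #{A ∈ H.powersetCard 1 | A ⊆ S} :=
        sum_congr rfl fun S hS => by rw [hfilter S hS, card_powersetCard, Nat.choose_one_right]
    _ = ∑ A ∈ H.powersetCard 1, p ^ #A :=
        sum_binomialWeight_mul_card_filter_subset p fun A hA => (mem_powersetCard.1 hA).1
    _ = p * #H := by
        rw [sum_congr rfl fun A hA => by rw [(mem_powersetCard.1 hA).2, pow_one], sum_const,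
          card_powersetCard, Nat.choose_one_right, nsmul_eq_mul, mul_comm]

lemma exists_card_le_forall_not_disjoint (ℬ : Finset (Finset E)) (hℬ : ∀ A ∈ ℬ, A.Nonempty) :
    ∃ T : Finset E, #T ≤ #ℬ ∧ ∀ A ∈ ℬ, ¬Disjoint A T := by
  choose x hx using hℬ
  refine ⟨ℬ.attach.image fun A => x A.1 A.2, card_image_le.trans_eq card_attach, fun A hA => ?_⟩
  exact not_disjoint_iff.2 ⟨x A hA, hx A hA, mem_image.2 ⟨⟨A, hA⟩, mem_attach _ _, rfl⟩⟩

lemma exists_le_card_sub_card_filter_subset {p : ℝ} (hp0 : 0 ≤ p) (hp1 : p ≤ 1)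
    (H : Finset E) {𝒜 : Finset (Finset E)} (h𝒜 : ∀ A ∈ 𝒜, A ⊆ H) :
    ∃ S ⊆ H, p * #H - ∑ A ∈ 𝒜, p ^ #A ≤ #S - #{A ∈ 𝒜 | A ⊆ S} := by
  obtain ⟨S, hS, hmax⟩ := exists_max_image H.powerset
    (fun S => (#S : ℝ) - #{A ∈ 𝒜 | A ⊆ S}) ⟨∅, empty_mem_powerset H⟩
  refine ⟨S, mem_powerset.1 hS, ?_⟩
  calc p * #H - ∑ A ∈ 𝒜, p ^ #A
      = ∑ T ∈ H.powerset, binomialWeight p H T * (#T - #{A ∈ 𝒜 | A ⊆ T}) := by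
        simp only [mul_sub, sum_sub_distrib, sum_binomialWeight_mul_card,
          sum_binomialWeight_mul_card_filter_subset p h𝒜]
    _ ≤ ∑ T ∈ H.powerset, binomialWeight p H T * (#S - #{A ∈ 𝒜 | A ⊆ S}) :=
        sum_le_sum fun T hT =>
          mul_le_mul_of_nonneg_left (hmax T hT) (binomialWeight_nonneg hp0 hp1 H T)
    _ = #S - #{A ∈ 𝒜 | A ⊆ S} := by rw [← sum_mul, sum_binomialWeight, one_mul]

theorem exists_subset_forall_not_subset {p : ℝ} (hp0 : 0 ≤ p) (hp1 : p ≤ 1)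
    (H : Finset E) {𝒜 : Finset (Finset E)} (h𝒜H : ∀ A ∈ 𝒜, A ⊆ H)
    (h𝒜 : ∀ A ∈ 𝒜, A.Nonempty) :
    ∃ S ⊆ H, (∀ A ∈ 𝒜, ¬A ⊆ S) ∧ p * #H - ∑ A ∈ 𝒜, p ^ #A ≤ #S := by
  obtain ⟨S, hSH, hS⟩ := exists_le_card_sub_card_filter_subset hp0 hp1 H h𝒜H
  obtain ⟨T, hT, hST⟩ := exists_card_le_forall_not_disjoint {A ∈ 𝒜 | A ⊆ S}
    fun A hA => h𝒜 A (mem_filter.1 hA).1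
  refine ⟨S \ T, sdiff_subset.trans hSH, fun A hA hAST => ?_, ?_⟩
  · exact hST A (mem_filter.2 ⟨hA, hAST.trans sdiff_subset⟩)
      (disjoint_of_subset_left hAST sdiff_disjoint)
  · have : (#S : ℝ) ≤ #(S \ T) + #T := by exact_mod_cast card_le_card_sdiff_add_card
    have : (#T : ℝ) ≤ #{A ∈ 𝒜 | A ⊆ S} := by exact_mod_cast hT
    linarith

end Finset

section Hypergraph

variable {V : Type*} [DecidableEq V]

def completeMultipartiteEdges {k : ℕ} (A : Fin k → Finset V) : Finset (Finset V) :=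
  (Fintype.piFinset A).image fun f => univ.image f

lemma completeMultipartiteEdges_subset_iff {k : ℕ} {A : Fin k → Finset V} {X : Finset (Finset V)} :
    completeMultipartiteEdges A ⊆ X ↔ ∀ f : Fin k → V, (∀ i, f i ∈ A i) → univ.image f ∈ X := by
  simp [completeMultipartiteEdges, image_subset_iff]

lemma card_completeMultipartiteEdges {k r : ℕ} {A : Fin k → Finset V} (hA : ∀ i, #(A i) = r)
    (hdisj : Pairwise fun i j => Disjoint (A i) (A j)) :
    #(completeMultipartiteEdges A) = r ^ k := by
  rw [completeMultipartiteEdges, card_image_of_injOn, Fintype.card_piFinset]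
  · simp [hA]
  intro f hf g hg hfg
  rw [mem_coe, Fintype.mem_piFinset] at hf hg
  simp only at hfg
  funext i
  obtain ⟨j, -, hj⟩ := mem_image.1 (hfg ▸ mem_image_of_mem f (mem_univ i))
  obtain rfl : j = i := by
    by_contra hji
    exact disjoint_left.1 (hdisj hji) (hj ▸ hg j) (hf i)
  exact hj.symm

/-- The edges of `G` of size `k`, each listed in every possible order. -/
def orderedEdges (k : ℕ) (G : Finset (Finset V)) : Finset (Fin k → V) :=
  G.biUnion fun e => univ.image fun σ : Fin k ≃ e => fun i => (σ i : V)

lemma card_orderedEdges_le (k : ℕ) (G : Finset (Finset V)) : #(orderedEdges k G) ≤ #G * k ! := by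
  refine card_biUnion_le.trans (sum_le_card_nsmul _ _ _ fun e _ => card_image_le.trans ?_)
  rw [card_univ]
  rcases isEmpty_or_nonempty (Fin k ≃ e) with h | ⟨⟨σ⟩⟩
  · simp
  · rw [Fintype.card_equiv σ, Fintype.card_fin]

lemma mem_orderedEdges {k : ℕ} {G : Finset (Finset V)} {f : Fin k → V} (hf : f.Injective)
    (hfG : univ.image f ∈ G) : f ∈ orderedEdges k G := by
  refine mem_biUnion.2 ⟨_, hfG, mem_image.2 ⟨Equiv.ofBijective
    (fun i => ⟨f i, mem_image_of_mem f (mem_univ i)⟩) ⟨fun i j hij => hf ?_, ?_⟩, mem_univ _, rfl⟩⟩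
  · exact congrArg Subtype.val hij
  · rintro ⟨x, hx⟩
    obtain ⟨i, -, rfl⟩ := mem_image.1 hx
    exact ⟨i, rfl⟩

open scoped Classical in
noncomputable def completeMultipartiteCopies (k r : ℕ) (G : Finset (Finset V)) :
    Finset (Finset (Finset V)) :=
  {X ∈ G.powerset | ∃ A : Fin k → Finset V, (∀ i, #(A i) = r) ∧
    (Pairwise fun i j => Disjoint (A i) (A j)) ∧ completeMultipartiteEdges A = X}

lemma mem_completeMultipartiteCopies {k r : ℕ} {G X : Finset (Finset V)} :
    X ∈ completeMultipartiteCopies k r G ↔ X ⊆ G ∧ ∃ A : Fin k → Finset V, (∀ i, #(A i) = r) ∧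
      (Pairwise fun i j => Disjoint (A i) (A j)) ∧ completeMultipartiteEdges A = X := by
  classical
  rw [completeMultipartiteCopies, mem_filter, mem_powerset]

lemma card_of_mem_completeMultipartiteCopies {k r : ℕ} {G X : Finset (Finset V)}
    (hX : X ∈ completeMultipartiteCopies k r G) : #X = r ^ k := by
  obtain ⟨-, A, hA, hdisj, rfl⟩ := mem_completeMultipartiteCopies.1 hX
  exact card_completeMultipartiteEdges hA hdisj

lemma card_completeMultipartiteCopies_le (k r : ℕ) (G : Finset (Finset V)) :
    #(completeMultipartiteCopies k r G) ≤ (#G * k !) ^ r := by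
  classical
  have hsub : completeMultipartiteCopies k r G ⊆
      (Fintype.piFinset fun _ : Fin r => orderedEdges k G).image
        fun g => completeMultipartiteEdges fun i => univ.image fun j => g j i := by
    intro X hX
    obtain ⟨hXG, A, hA, hdisj, rfl⟩ := mem_completeMultipartiteCopies.1 hX
    -- with each part enumerated by `β i`, the copy is determined by its transversals `β · j`
    let β i : Fin r ≃ A i := ((A i).equivFinOfCardEq (hA i)).symm
    have hparts : ∀ i, univ.image (fun j => (β i j : V)) = A i := fun i => by
      ext x
      refine ⟨fun hx => ?_, fun hx => mem_image.2 ⟨(β i).symm ⟨x, hx⟩, mem_univ _, by simp⟩⟩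
      obtain ⟨j, -, rfl⟩ := mem_image.1 hx
      exact (β i j).2
    refine mem_image.2 ⟨fun j i => β i j, Fintype.mem_piFinset.2 fun j => ?_, by simp [hparts]⟩
    refine mem_orderedEdges (fun i i' h => ?_) ?_
    · by_contra hii'
      exact disjoint_left.1 (hdisj hii') (β i j).2 (h ▸ (β i' j).2)
    · exact completeMultipartiteEdges_subset_iff.1 hXG _ fun i => (β i j).2
  calc #(completeMultipartiteCopies k r G)
      ≤ #(Fintype.piFinset fun _ : Fin r => orderedEdges k G) :=
        (card_le_card hsub).trans card_image_le
    _ = #(orderedEdges k G) ^ r := by simp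
    _ ≤ (#G * k !) ^ r := Nat.pow_le_pow_left (card_orderedEdges_le k G) r

theorem exists_subset_forall_not_completeMultipartiteEdges_subset {k r : ℕ} (hr : 1 ≤ r)
    {p : ℝ} (hp0 : 0 ≤ p) (hp1 : p ≤ 1) (G : Finset (Finset V)) :
    ∃ S ⊆ G, (∀ A : Fin k → Finset V, (∀ i, #(A i) = r) →
        (Pairwise fun i j => Disjoint (A i) (A j)) → ¬completeMultipartiteEdges A ⊆ S) ∧
      p * #G - (#G * k !) ^ r * p ^ r ^ k ≤ #S := by
  obtain ⟨S, hSG, hfree, hS⟩ := exists_subset_forall_not_subset hp0 hp1 G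
    (𝒜 := completeMultipartiteCopies k r G) (fun X hX => (mem_completeMultipartiteCopies.1 hX).1)
    fun X hX => card_pos.1 <| (card_of_mem_completeMultipartiteCopies hX).symm ▸ pow_pos hr k
  refine ⟨S, hSG, fun A hA hdisj hAS =>
    hfree _ (mem_completeMultipartiteCopies.2 ⟨hAS.trans hSG, A, hA, hdisj, rfl⟩) hAS, ?_⟩
  rw [sum_congr rfl fun X hX => by rw [card_of_mem_completeMultipartiteCopies hX], sum_const,
    nsmul_eq_mul] at hS
  refine le_trans ?_ hS
  gcongr
  exact_mod_cast card_completeMultipartiteCopies_le k r G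

end Hypergraph

lemma four_mul_factorial_pow_le_two_pow_pow {k r : ℕ} (hk : 1 ≤ k) (hr : 2 ≤ r) :
    4 * k ! ^ r ≤ 2 ^ r ^ k := by
  induction k, hk using Nat.le_induction with
  | base => simpa using Nat.pow_le_pow_right two_pos hr
  | succ k hk ih =>
    have hexp : k * r + r ^ k ≤ r ^ (k + 1) := by
      have := Nat.mul_le_pow (show r ≠ 1 by omega) k
      have := Nat.mul_le_mul_left (r ^ k) hr
      rw [pow_succ]
      linarith
    calc 4 * (k + 1)! ^ r = (k + 1) ^ r * (4 * k ! ^ r) := by rw [Nat.factorial_succ, mul_pow]; ring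
      _ ≤ (2 ^ k) ^ r * 2 ^ r ^ k :=
        Nat.mul_le_mul (Nat.pow_le_pow_left Nat.lt_two_pow_self r) ih
      _ = 2 ^ (k * r + r ^ k) := by rw [← pow_mul, pow_add]
      _ ≤ 2 ^ r ^ (k + 1) := Nat.pow_le_pow_right two_pos hexp

lemma natCast_rpow_le_one_of_nonpos (n : ℕ) {y : ℝ} (hy : y ≤ 0) : (n : ℝ) ^ y ≤ 1 := by
  rcases Nat.eq_zero_or_pos n with rfl | hn
  · simpa using Real.zero_rpow_le_one y
  · exact Real.rpow_le_one_of_one_le_of_nonpos (by exact_mod_cast hn) hy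

lemma pow_mul_rpow_neg_one_div_pow {y : ℝ} (hy : 0 < y) {q r R : ℕ} (hq : q ≠ 0)
    (hR : (q : ℝ) * r + 1 = R + q) :
    y ^ r * (y ^ (-1 / q : ℝ)) ^ R = y ^ (-1 / q : ℝ) * y := by
  rw [← Real.rpow_mul_natCast hy.le, ← Real.rpow_natCast, ← Real.rpow_add hy,
    ← Real.rpow_add_one hy.ne']
  congr 1
  field_simp
  linarith

lemma geom_sum_range_mul_add_one (r k : ℕ) :
    ((∑ i ∈ range k, r ^ i : ℕ) : ℝ) * r + 1 = ((r ^ k : ℕ) : ℝ) + ∑ i ∈ range k, r ^ i := by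
  have := geom_sum_mul (r : ℝ) k
  push_cast
  linarith

lemma quarter_rpow_le_mul_sub_mul_pow {k r q m : ℕ} (hk : 1 ≤ k) (hr : 2 ≤ r) (hq : 2 ≤ q)
    (hqr : (q : ℝ) * r + 1 = ((r ^ k : ℕ) : ℝ) + q) :
    1 / 4 * (m : ℝ) ^ (((q : ℝ) - 1) / q) ≤
      (m : ℝ) ^ (-1 / q : ℝ) / 2 * m -
        (m * k ! : ℝ) ^ r * ((m : ℝ) ^ (-1 / q : ℝ) / 2) ^ r ^ k := by
  have hq0 : (q : ℝ) ≠ 0 := by positivity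
  rcases Nat.eq_zero_or_pos m with rfl | hm
  · have hexp : ((q : ℝ) - 1) / q ≠ 0 :=
      div_ne_zero (sub_ne_zero.2 (by exact_mod_cast (show q ≠ 1 by omega))) hq0
    simp [Real.zero_rpow hexp, Real.zero_rpow (div_ne_zero (neg_ne_zero.2 one_ne_zero) hq0),
      zero_pow (pow_ne_zero k (show r ≠ 0 by omega))]
  have hm : (0 : ℝ) < m := by exact_mod_cast hm
  set x := (m : ℝ) ^ (-1 / q : ℝ)
  have hmq : (m : ℝ) ^ (((q : ℝ) - 1) / q) = x * m := by
    rw [← Real.rpow_add_one hm.ne']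
    congr 1
    field_simp
    ring
  have hmx : (m : ℝ) ^ r * x ^ r ^ k = x * m :=
    pow_mul_rpow_neg_one_div_pow hm (by omega) hqr
  have hconst : (k ! : ℝ) ^ r * (1 / 2) ^ r ^ k ≤ 1 / 4 := by
    have : (4 : ℝ) * k ! ^ r ≤ 2 ^ r ^ k := by
      exact_mod_cast four_mul_factorial_pow_le_two_pow_pow hk hr
    rw [one_div_pow, mul_one_div, div_le_iff₀ (by positivity)]
    linarith
  calc 1 / 4 * (m : ℝ) ^ (((q : ℝ) - 1) / q) = x / 2 * m - 1 / 4 * (x * m) := by rw [hmq]; ring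
    _ ≤ x / 2 * m - (k ! : ℝ) ^ r * (1 / 2) ^ r ^ k * (x * m) := by gcongr
    _ = x / 2 * m - (m * k ! : ℝ) ^ r * (x / 2) ^ r ^ k := by rw [← hmx]; ring

theorem stmt8_general {V : Type*} [DecidableEq V] (k r q m : ℕ) (hk : 2 ≤ k) (hr : 2 ≤ r)
    (hq : q = ∑ i ∈ Finset.range k, r ^ i)
    (G : Finset (Finset V)) (hm : G.card = m) :
    ∃ G' ⊆ G,
      (¬ ∃ A : Fin k → Finset V, (∀ i, (A i).card = r) ∧
        (Pairwise fun i j => Disjoint (A i) (A j)) ∧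
        ∀ f : Fin k → V, (∀ i, f i ∈ A i) → Finset.univ.image f ∈ G') ∧
      ((G'.card : ℝ) ≥ (1 / 4) * (m : ℝ) ^ (((q : ℝ) - 1) / q)) := by
  subst hm
  have hq2 : 2 ≤ q := hq ▸ hr.trans
    (by simpa using single_le_sum (fun i _ => Nat.zero_le (r ^ i)) (mem_range.2 hk))
  set p : ℝ := (#G : ℝ) ^ (-1 / q : ℝ) / 2
  have hp1 : p ≤ 1 := by
    have := natCast_rpow_le_one_of_nonpos #G
      (div_nonpos_of_nonpos_of_nonneg (by norm_num) q.cast_nonneg : (-1 / q : ℝ) ≤ 0)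
    simp only [p]
    linarith
  obtain ⟨S, hSG, hfree, hS⟩ := exists_subset_forall_not_completeMultipartiteEdges_subset
    (k := k) (r := r) (by omega) (by positivity) hp1 G
  refine ⟨S, hSG, fun ⟨A, hA, hdisj, hAS⟩ => hfree A hA hdisj
    (completeMultipartiteEdges_subset_iff.2 hAS), ?_⟩
  exact (quarter_rpow_le_mul_sub_mul_pow (by omega) hr hq2
    (hq ▸ geom_sum_range_mul_add_one r k)).trans hS

/-- For `k, r ≥ 2` and `q = 1 + r + ⋯ + r^(k-1) = (r^k - 1)/(r - 1)`, every `k`-uniform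
hypergraph with `m` edges has a `K^(k)_{r,…,r}`-free subhypergraph with at least
`(1/4) * m^((q-1)/q)` edges. -/
theorem stmt8 {V : Type*} [DecidableEq V] (k r q m : ℕ) (hk : 2 ≤ k) (hr : 2 ≤ r)
    (hq : q = ∑ i ∈ Finset.range k, r ^ i)
    (G : Finset (Finset V)) (huniform : ∀ e ∈ G, e.card = k) (hm : G.card = m) :
    ∃ G' ⊆ G,
      (¬ ∃ A : Fin k → Finset V, (∀ i, (A i).card = r) ∧
        (Pairwise fun i j => Disjoint (A i) (A j)) ∧
        ∀ f : Fin k → V, (∀ i, f i ∈ A i) → Finset.univ.image f ∈ G') ∧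
      ((G'.card : ℝ) ≥ (1 / 4) * (m : ℝ) ^ (((q : ℝ) - 1) / q)) :=
  stmt8_general k r q m hk hr hq G hm
end

section
/- Let r >= 1 and let G be a k-partite k-uniform hypergraph with parts U_1,...,U_k where |U_i| = n^{r^i}, having exactly a * (|U_2| * |U_3| * ... * |U_k|) edges for some real a >= r. Then G contains at least binomial(a, r) * product over i from 1 to k-1 of binomial(|U_i|, r) copies of K^{(k)}_{r,...,r}. -/
/-- Generalized binomial coefficient `C(a, r)` for real `a`. -/
noncomputable def rchoose (a : ℝ) (r : ℕ) : ℝ :=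
  (∏ i ∈ Finset.range r, (a - i)) / (r.factorial : ℝ)

/-!
Induction on the number of parts, peeling off the first part `U₁`. A tuple `g` of vertices of
the other parts has a neighbourhood in `U₁`, and the pairs `(R, g)` with `R` an `r`-subset of
that neighbourhood are counted both by `∑_g C(deg g, r)` and by `∑_R |link R|`. Jensen for a
convex monotone extension of `x ↦ C(x, r)` bounds the first sum from below, and a second
Jensen over the `C(|U₁|, r)` sets `R`, applied to the bound for the link graphs, gives the
bound for `G`. Since the links can have any number of edges, the induction runs with an
explicit convex monotone bound `copyBound`, evaluated only at the end: as
`|U_{i+1}| ≥ |U_i|^r ≥ r! C(|U_i|, r)` and `r! C(a, r) ≥ a`, the average edge density of the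
links never falls below `a ≥ r`.
-/

open Finset

lemma ConvexOn.monotone_comp {E : Type*} [AddCommMonoid E] [Module ℝ E] {s : Set E} {f : E → ℝ}
    {g : ℝ → ℝ} (hg : ConvexOn ℝ Set.univ g) (hgm : Monotone g) (hf : ConvexOn ℝ s f) :
    ConvexOn ℝ s (g ∘ f) :=
  ⟨hf.1, fun _ hx _ hy _ _ ha hb hab =>
    (hgm (hf.2 hx hy ha hb hab)).trans (hg.2 trivial trivial ha hb hab)⟩

lemma ConvexOn.comp_max_const {f : ℝ → ℝ} {b : ℝ} (hf : ConvexOn ℝ (Set.Ici b) f)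
    (hm : MonotoneOn f (Set.Ici b)) : ConvexOn ℝ Set.univ fun x => f (max x b) := by
  refine ⟨convex_univ, fun x _ y _ s t hs ht hst => ?_⟩
  have hmax := ((convexOn_id convex_univ).sup (convexOn_const b convex_univ)).2
    (Set.mem_univ x) (Set.mem_univ y) hs ht hst
  simp only [Pi.sup_apply, id] at hmax
  have hmem : ∀ z, max z b ∈ Set.Ici b := fun z => le_max_right z b
  exact (hm (hmem _) ((convex_Ici b) (hmem x) (hmem y) hs ht hst) hmax).trans
    (hf.2 (hmem x) (hmem y) hs ht hst)

lemma ConvexOn.card_mul_map_sum_div_card_le {ι : Type*} (s : Finset ι) (p : ι → ℝ)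
    {φ : ℝ → ℝ} (hφ : ConvexOn ℝ Set.univ φ) :
    #s * φ ((∑ i ∈ s, p i) / #s) ≤ ∑ i ∈ s, φ (p i) := by
  rcases s.eq_empty_or_nonempty with rfl | hs
  · simp
  have hc : (0 : ℝ) < #s := by exact_mod_cast hs.card_pos
  have h := hφ.map_sum_le (t := s) (w := fun _ => (#s : ℝ)⁻¹) (p := p)
    (fun _ _ => by positivity) (by simp [hc.ne']) (fun _ _ => Set.mem_univ _)
  simp only [smul_eq_mul, ← mul_sum] at h
  rw [div_eq_inv_mul]
  calc (#s : ℝ) * φ ((#s : ℝ)⁻¹ * ∑ i ∈ s, p i)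
      ≤ #s * ((#s : ℝ)⁻¹ * ∑ i ∈ s, φ (p i)) := by gcongr
    _ = ∑ i ∈ s, φ (p i) := by field_simp

lemma prod_Ico_eq_prod_fin {M : Type*} [CommMonoid M] (f : ℕ → M) (m k : ℕ) :
    ∏ i ∈ Ico m (m + k), f i = ∏ i : Fin k, f (i + m) := by
  rw [prod_Ico_eq_prod_range, Nat.add_sub_cancel_left, ← Fin.prod_univ_eq_prod_range]
  simp only [add_comm]

lemma rchoose_eq_descPochhammer_eval (a : ℝ) (r : ℕ) :
    rchoose a r = (descPochhammer ℝ r).eval a / r.factorial := by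
  rw [rchoose, descPochhammer_eval_eq_prod_range]

lemma rchoose_natCast (d r : ℕ) : rchoose d r = d.choose r := by
  rw [rchoose_eq_descPochhammer_eval, Nat.cast_choose_eq_descPochhammer_div]

lemma rchoose_nonneg {r : ℕ} {a : ℝ} (ha : (r : ℝ) - 1 ≤ a) : 0 ≤ rchoose a r := by
  rw [rchoose_eq_descPochhammer_eval]
  exact div_nonneg (descPochhammer_nonneg ha) (by positivity)

lemma monotoneOn_rchoose (r : ℕ) : MonotoneOn (rchoose · r) (Set.Ici ((r : ℝ) - 1)) :=
  fun x hx y hy hxy => by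
    simp only [rchoose_eq_descPochhammer_eval]
    exact div_le_div_of_nonneg_right (monotoneOn_descPochhammer_eval r hx hy hxy) (by positivity)

lemma convexOn_rchoose (r : ℕ) : ConvexOn ℝ (Set.Ici ((r : ℝ) - 1)) (rchoose · r) := by
  simpa only [rchoose_eq_descPochhammer_eval, div_eq_inv_mul, smul_eq_mul] using
    (convexOn_descPochhammer_eval r).smul (c := (r.factorial : ℝ)⁻¹) (by positivity)

lemma le_factorial_mul_rchoose {r : ℕ} (hr : r ≠ 0) {a : ℝ} (ha : (r : ℝ) ≤ a) :
    a ≤ r.factorial * rchoose a r := by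
  obtain ⟨m, rfl⟩ := Nat.exists_eq_succ_of_ne_zero hr
  rw [rchoose_eq_descPochhammer_eval, mul_div_cancel₀ _ (by positivity), descPochhammer_succ_left]
  simp only [Polynomial.eval_mul, Polynomial.eval_X, Polynomial.eval_comp, Polynomial.eval_sub,
    Polynomial.eval_one]
  push_cast at ha
  have hm : (m : ℝ) - 1 ≤ a - 1 := by linarith
  have hpow : 1 ≤ (a - 1 - m + 1) ^ m := one_le_pow₀ (by linarith)
  nlinarith [pow_le_descPochhammer_eval hm]

-- Below `r - 1` the polynomial `rchoose · r` is neither monotone nor convex; clamping the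
-- argument there repairs both without changing the values at natural numbers.
noncomputable def rchooseTrunc (r : ℕ) (x : ℝ) : ℝ := rchoose (max x ((r : ℝ) - 1)) r

lemma rchooseTrunc_of_le {r : ℕ} {x : ℝ} (hx : (r : ℝ) - 1 ≤ x) :
    rchooseTrunc r x = rchoose x r := by
  rw [rchooseTrunc, max_eq_left hx]

lemma rchooseTrunc_natCast (r d : ℕ) : rchooseTrunc r d = d.choose r := by
  rcases le_or_gt ((r : ℝ) - 1) d with h | h
  · rw [rchooseTrunc_of_le h, rchoose_natCast]
  · have hdr : d + 1 < r := by
      have : (d : ℝ) + 1 < r := by linarith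
      exact_mod_cast this
    rw [rchooseTrunc, max_eq_right h.le, ← Nat.cast_pred (by omega), rchoose_natCast,
      Nat.choose_eq_zero_of_lt (by omega), Nat.choose_eq_zero_of_lt (by omega)]

lemma monotone_rchooseTrunc (r : ℕ) : Monotone (rchooseTrunc r) := fun x y h =>
  monotoneOn_rchoose r (le_max_right x _) (le_max_right y _) (max_le_max_right _ h)

lemma convexOn_rchooseTrunc (r : ℕ) : ConvexOn ℝ Set.univ (rchooseTrunc r) :=
  (convexOn_rchoose r).comp_max_const (monotoneOn_rchoose r)

lemma monotone_mul_rchooseTrunc_div {M c : ℝ} (r : ℕ) (hM : 0 ≤ M) (hc : 0 ≤ c) :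
    Monotone fun e => M * rchooseTrunc r (e / M) / c := fun _ _ h => by
  have := monotone_rchooseTrunc r (div_le_div_of_nonneg_right h hM)
  dsimp only
  gcongr

lemma convexOn_mul_rchooseTrunc_div {M c : ℝ} (r : ℕ) (hM : 0 ≤ M) (hc : 0 ≤ c) :
    ConvexOn ℝ Set.univ fun e => M * rchooseTrunc r (e / M) / c := by
  have h := ((convexOn_rchooseTrunc r).comp_linearMap (LinearMap.lsmul ℝ ℝ M⁻¹)).smul
    (div_nonneg hM hc)
  rw [Set.preimage_univ] at h
  refine h.congr fun e _ => ?_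
  simp only [Function.comp, LinearMap.lsmul_apply, smul_eq_mul, inv_mul_eq_div]
  ring

-- The lower bound for the number of copies in a `k`-partite graph with part sizes `N` and `e`
-- edges that the two Jensen steps produce from the bound for `k - 1` parts; with no parts
-- there is one potential edge and one potential copy, and they are present together.
noncomputable def copyBound (r : ℕ) : (k : ℕ) → (Fin k → ℕ) → ℝ → ℝ
  | 0, _, e => e
  | k + 1, N, e =>
      (N 0).choose r * copyBound r k (fun i => N i.succ)
        ((∏ i : Fin k, (N i.succ : ℝ)) * rchooseTrunc r (e / ∏ i : Fin k, (N i.succ : ℝ)) /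
          (N 0).choose r)

lemma copyBound_zero (r : ℕ) (N : Fin 0 → ℕ) (e : ℝ) : copyBound r 0 N e = e := rfl

lemma copyBound_succ (r k : ℕ) (N : Fin (k + 1) → ℕ) (e : ℝ) :
    copyBound r (k + 1) N e = (N 0).choose r * copyBound r k (fun i => N i.succ)
      ((∏ i : Fin k, (N i.succ : ℝ)) * rchooseTrunc r (e / ∏ i : Fin k, (N i.succ : ℝ)) /
        (N 0).choose r) :=
  rfl

lemma monotone_copyBound (r : ℕ) : ∀ (k : ℕ) (N : Fin k → ℕ), Monotone (copyBound r k N)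
  | 0, _ => monotone_id
  | k + 1, N => fun _ _ h =>
      mul_le_mul_of_nonneg_left (monotone_copyBound r k _
        (monotone_mul_rchooseTrunc_div (M := ∏ i : Fin k, (N i.succ : ℝ))
          (c := (N 0).choose r) r (by positivity) (by positivity) h)) (by positivity)

lemma convexOn_copyBound (r : ℕ) : ∀ (k : ℕ) (N : Fin k → ℕ),
    ConvexOn ℝ Set.univ (copyBound r k N)
  | 0, _ => convexOn_id convex_univ
  | k + 1, N =>
      (((convexOn_copyBound r k (fun i => N i.succ)).monotone_comp (monotone_copyBound r k _)
        (convexOn_mul_rchooseTrunc_div (M := ∏ i : Fin k, (N i.succ : ℝ))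
          (c := (N 0).choose r) r (by positivity) (by positivity))).smul
          (c := ((N 0).choose r : ℝ)) (by positivity) :)

section Hypergraph

variable {k : ℕ}

def copies (r : ℕ) (N : Fin k → ℕ) (E : Finset (∀ i, Fin (N i))) :
    Finset (∀ i, Finset (Fin (N i))) :=
  {A | (∀ i, #(A i) = r) ∧ ∀ g : ∀ i, Fin (N i), (∀ i, g i ∈ A i) → g ∈ E}

def neighbors (N : Fin (k + 1) → ℕ) (E : Finset (∀ i, Fin (N i)))
    (g : ∀ i : Fin k, Fin (N i.succ)) : Finset (Fin (N 0)) :=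
  {v | Fin.cons (α := fun i => Fin (N i)) v g ∈ E}

def link (N : Fin (k + 1) → ℕ) (E : Finset (∀ i, Fin (N i))) (R : Finset (Fin (N 0))) :
    Finset (∀ i : Fin k, Fin (N i.succ)) :=
  {g | R ⊆ neighbors N E g}

lemma mem_copies {r : ℕ} {N : Fin k → ℕ} {E : Finset (∀ i, Fin (N i))}
    {A : ∀ i, Finset (Fin (N i))} :
    A ∈ copies r N E ↔ (∀ i, #(A i) = r) ∧ ∀ g : ∀ i, Fin (N i), (∀ i, g i ∈ A i) → g ∈ E := by
  simp [copies]

lemma mem_link {N : Fin (k + 1) → ℕ} {E : Finset (∀ i, Fin (N i))} {R : Finset (Fin (N 0))}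
    {g : ∀ i : Fin k, Fin (N i.succ)} :
    g ∈ link N E R ↔ ∀ v ∈ R, Fin.cons (α := fun i => Fin (N i)) v g ∈ E := by
  simp [link, neighbors, subset_iff]

lemma card_le_card_copies_zero (r : ℕ) (N : Fin 0 → ℕ) (E : Finset (∀ i, Fin (N i))) :
    #E ≤ #(copies r N E) := by
  rcases E.eq_empty_or_nonempty with rfl | ⟨g, hg⟩
  · simp
  calc #E ≤ 1 := card_le_one.2 fun _ _ _ _ => Subsingleton.elim _ _
    _ ≤ #(copies r N E) := card_pos.2 ⟨fun i => i.elim0, mem_copies.2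
      ⟨fun i => i.elim0, fun g' _ => Subsingleton.elim g g' ▸ hg⟩⟩

lemma card_eq_sum_card_neighbors (N : Fin (k + 1) → ℕ) (E : Finset (∀ i, Fin (N i))) :
    #E = ∑ g, #(neighbors N E g) := by
  simp only [neighbors, card_filter]
  rw [← Fintype.sum_prod_type_right', Fintype.sum_equiv (Fin.consEquiv fun i => Fin (N i))
    (fun x => if Fin.cons x.1 x.2 ∈ E then 1 else 0) (fun f => if f ∈ E then 1 else 0)
    fun _ => rfl]
  simp

lemma sum_card_link (r : ℕ) (N : Fin (k + 1) → ℕ) (E : Finset (∀ i, Fin (N i))) :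
    ∑ R ∈ powersetCard r univ, #(link N E R) = ∑ g, (#(neighbors N E g)).choose r := by
  have hbelow : ∀ g, (powersetCard r univ).bipartiteBelow (· ⊆ neighbors N E ·) g =
      powersetCard r (neighbors N E g) := fun g => by
    ext R
    simp [mem_powersetCard, and_comm]
  calc ∑ R ∈ powersetCard r univ, #(link N E R)
      = ∑ R ∈ powersetCard r univ, #(univ.bipartiteAbove (· ⊆ neighbors N E ·) R) := rfl
    _ = ∑ g, (#(neighbors N E g)).choose r := by
      rw [sum_card_bipartiteAbove_eq_sum_card_bipartiteBelow]
      simp_rw [hbelow, card_powersetCard]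

lemma sum_card_copies_link_le (r : ℕ) (N : Fin (k + 1) → ℕ) (E : Finset (∀ i, Fin (N i))) :
    ∑ R ∈ powersetCard r univ, #(copies r (fun i => N i.succ) (link N E R)) ≤
      #(copies r N E) := by
  rw [← card_sigma]
  refine card_le_card_of_injOn (fun p => Fin.cons (α := fun i => Finset (Fin (N i))) p.1 p.2)
    ?_ ?_
  · rintro ⟨R, B⟩ hRB
    simp only [mem_coe, mem_sigma, mem_powersetCard] at hRB ⊢
    obtain ⟨⟨-, hR⟩, hB⟩ := hRB
    obtain ⟨hB, hBE⟩ := mem_copies.1 hB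
    refine mem_copies.2 ⟨fun i => ?_, fun g hg => ?_⟩
    · cases i using Fin.cases <;> simp [hR, hB]
    · have hcons := mem_link.1 (hBE (Fin.tail g) fun i => hg i.succ) (g 0) (hg 0)
      rwa [Fin.cons_self_tail] at hcons
  · rintro ⟨R, B⟩ - ⟨R', B'⟩ - h
    obtain ⟨rfl, rfl⟩ := Fin.cons_injective2 h
    rfl

lemma mul_rchooseTrunc_le_sum_card_link (r : ℕ) (N : Fin (k + 1) → ℕ)
    (E : Finset (∀ i, Fin (N i))) :
    (∏ i : Fin k, (N i.succ : ℝ)) * rchooseTrunc r (#E / ∏ i : Fin k, (N i.succ : ℝ)) ≤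
      ∑ R ∈ powersetCard r univ, (#(link N E R) : ℝ) := by
  set T : Finset (∀ i : Fin k, Fin (N i.succ)) := univ
  have hT : (#T : ℝ) = ∏ i : Fin k, (N i.succ : ℝ) := by simp [T]
  calc (∏ i : Fin k, (N i.succ : ℝ)) * rchooseTrunc r (#E / ∏ i : Fin k, (N i.succ : ℝ))
      = #T * rchooseTrunc r ((∑ g ∈ T, (#(neighbors N E g) : ℝ)) / #T) := by
        rw [hT, card_eq_sum_card_neighbors N E, Nat.cast_sum]
    _ ≤ ∑ g ∈ T, rchooseTrunc r #(neighbors N E g) :=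
        (convexOn_rchooseTrunc r).card_mul_map_sum_div_card_le _ _
    _ = ∑ R ∈ powersetCard r univ, (#(link N E R) : ℝ) := by
        simp_rw [rchooseTrunc_natCast]
        exact_mod_cast (sum_card_link r N E).symm

end Hypergraph

lemma copyBound_le_card_copies (r : ℕ) : ∀ (k : ℕ) (N : Fin k → ℕ)
    (E : Finset (∀ i, Fin (N i))), copyBound r k N #E ≤ #(copies r N E)
  | 0, N, E => by
    rw [copyBound_zero]
    exact_mod_cast card_le_card_copies_zero r N E
  | k + 1, N, E => by
    have hc : (#(powersetCard r (univ : Finset (Fin (N 0)))) : ℝ) = (N 0).choose r := by simp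
    calc copyBound r (k + 1) N #E
        ≤ (N 0).choose r * copyBound r k (fun i => N i.succ)
            ((∑ R ∈ powersetCard r univ, (#(link N E R) : ℝ)) / (N 0).choose r) := by
          rw [copyBound_succ]
          gcongr
          exact monotone_copyBound r k _
            (div_le_div_of_nonneg_right (mul_rchooseTrunc_le_sum_card_link r N E) (by positivity))
      _ ≤ ∑ R ∈ powersetCard r univ, copyBound r k (fun i => N i.succ) #(link N E R) := by
          rw [← hc]
          exact (convexOn_copyBound r k _).card_mul_map_sum_div_card_le _ _
      _ ≤ ∑ R ∈ powersetCard r univ, (#(copies r (fun i => N i.succ) (link N E R)) : ℝ) :=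
          sum_le_sum fun R _ => copyBound_le_card_copies r k _ _
      _ ≤ #(copies r N E) := by exact_mod_cast sum_card_copies_link_le r N E

lemma mul_rchooseTrunc_mul_div_self (r : ℕ) (a M : ℝ) :
    M * rchooseTrunc r (a * M / M) = M * rchooseTrunc r a := by
  rcases eq_or_ne M 0 with rfl | hM
  · simp
  · rw [mul_div_cancel_right₀ a hM]

lemma factorial_mul_le_mul_div_choose {m n r : ℕ} (h : m ^ r ≤ n) (hm : r ≤ m) {x : ℝ}
    (hx : 0 ≤ x) : r.factorial * x ≤ n * x / m.choose r := by
  have hcn : (m.choose r : ℝ) * r.factorial ≤ n := by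
    rw [← le_div_iff₀ (by positivity)]
    exact (Nat.choose_le_pow_div r m).trans (by gcongr; exact_mod_cast h)
  rw [le_div_iff₀ (Nat.cast_pos.2 (Nat.choose_pos hm))]
  calc (r.factorial : ℝ) * x * m.choose r = (m.choose r * r.factorial) * x := by ring
    _ ≤ n * x := by gcongr

lemma rchoose_mul_prod_choose_le_copyBound {r : ℕ} (hr : r ≠ 0) :
    ∀ {k : ℕ} (N : Fin (k + 1) → ℕ), (∀ i : Fin k, N i.castSucc ^ r ≤ N i.succ) → r ≤ N 0 →
      ∀ {a : ℝ}, r ≤ a →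
        rchoose a r * ∏ i : Fin k, ((N i.castSucc).choose r : ℝ) ≤
          copyBound r (k + 1) N (a * ∏ i : Fin k, (N i.succ : ℝ))
  | 0, N, _, h0, a, ha => by
    have hc : ((N 0).choose r : ℝ) ≠ 0 := by exact_mod_cast (Nat.choose_pos h0).ne'
    simp [copyBound_succ, copyBound_zero, mul_div_cancel₀ _ hc,
      rchooseTrunc_of_le (show (r : ℝ) - 1 ≤ a by linarith)]
  | k + 1, N, hN, h0, a, ha => by
    set c : ℝ := (((N 0).choose r : ℕ) : ℝ)
    have ha' : (r : ℝ) ≤ r.factorial * rchoose a r := ha.trans (le_factorial_mul_rchoose hr ha)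
    have hrchoose : 0 ≤ rchoose a r := rchoose_nonneg (by linarith)
    have hN' : ∀ i : Fin k, N i.castSucc.succ ^ r ≤ N i.succ.succ := fun i => hN i.succ
    have h0' : r ≤ N 1 := h0.trans ((Nat.le_self_pow hr _).trans (hN 0))
    -- the links of the `c` sets `R` have average density at least `r! C(a, r)`
    have hdensity : r.factorial * rchoose a r * ∏ i : Fin k, (N i.succ.succ : ℝ) ≤
        (∏ i : Fin (k + 1), (N i.succ : ℝ)) * rchoose a r / c := by
      have h := factorial_mul_le_mul_div_choose (hN 0) h0
        (mul_nonneg hrchoose (by positivity : (0 : ℝ) ≤ ∏ i : Fin k, (N i.succ.succ : ℝ)))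
      rw [Fin.prod_univ_succ]
      simp only [Fin.castSucc_zero] at h
      calc _ = r.factorial * (rchoose a r * ∏ i : Fin k, (N i.succ.succ : ℝ)) := by ring
        _ ≤ N (Fin.succ 0) * (rchoose a r * ∏ i : Fin k, (N i.succ.succ : ℝ)) / c := h
        _ = _ := by ring
    calc rchoose a r * ∏ i : Fin (k + 1), ((N i.castSucc).choose r : ℝ)
        = c * (rchoose a r * ∏ i : Fin k, ((N i.castSucc.succ).choose r : ℝ)) := by
          rw [Fin.prod_univ_succ]
          simp only [Fin.castSucc_zero, Fin.succ_castSucc]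
          ring
      _ ≤ c * (rchoose (r.factorial * rchoose a r) r *
            ∏ i : Fin k, ((N i.castSucc.succ).choose r : ℝ)) := by
          gcongr
          exact monotoneOn_rchoose r (show (r : ℝ) - 1 ≤ a by linarith)
            (show (r : ℝ) - 1 ≤ _ by linarith) (le_factorial_mul_rchoose hr ha)
      _ ≤ c * copyBound r (k + 1) (fun i => N i.succ)
            (r.factorial * rchoose a r * ∏ i : Fin k, (N i.succ.succ : ℝ)) := by
          gcongr
          exact rchoose_mul_prod_choose_le_copyBound hr (fun i => N i.succ) hN' h0' ha'
      _ ≤ c * copyBound r (k + 1) (fun i => N i.succ)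
            ((∏ i : Fin (k + 1), (N i.succ : ℝ)) * rchoose a r / c) := by
          gcongr
          exact monotone_copyBound r _ _ hdensity
      _ = copyBound r (k + 1 + 1) N (a * ∏ i : Fin (k + 1), (N i.succ : ℝ)) := by
          rw [copyBound_succ r (k + 1) N, mul_rchooseTrunc_mul_div_self,
            rchooseTrunc_of_le (show (r : ℝ) - 1 ≤ a by linarith)]

theorem rchoose_mul_prod_choose_le_card_copies {r k : ℕ} (hr : r ≠ 0) (N : Fin (k + 1) → ℕ)
    (hN : ∀ i : Fin k, N i.castSucc ^ r ≤ N i.succ) (E : Finset (∀ i, Fin (N i))) {a : ℝ}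
    (ha : r ≤ a) (hE : #E = a * ∏ i : Fin k, (N i.succ : ℝ)) :
    rchoose a r * ∏ i : Fin k, ((N i.castSucc).choose r : ℝ) ≤ #(copies r N E) := by
  by_cases h0 : r ≤ N 0
  · refine (copyBound_le_card_copies r (k + 1) N E).trans' ?_
    rw [hE]
    exact rchoose_mul_prod_choose_le_copyBound hr N hN h0 ha
  cases k with
  | zero =>
    have hcard : #E ≤ N 0 := by simpa using card_le_univ E
    simp only [univ_eq_empty, prod_empty, mul_one] at hE
    exact absurd (Nat.cast_le.1 (ha.trans (hE ▸ Nat.cast_le.2 hcard))) h0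
  | succ k =>
    rw [Fin.prod_univ_succ, Fin.castSucc_zero, Nat.choose_eq_zero_of_lt (not_le.1 h0)]
    simp

/-- A `k`-partite `k`-graph with parts `U_1, …, U_k` of sizes `|U_i| = n^(r^i)` (edges are
modelled as transversal functions) having `a * ∏_{i≥2} |U_i|` edges, `a ≥ r`, contains at
least `C(a,r) * ∏_{i ≤ k-1} C(|U_i|, r)` copies of `K^(k)_{r,…,r}`. -/
theorem stmt9 (k n r : ℕ) (hk : 1 ≤ k) (hr : 1 ≤ r) (a : ℝ) (ha : (r : ℝ) ≤ a)
    (E : Finset ((i : Fin k) → Fin (n ^ r ^ ((i : ℕ) + 1))))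
    (hE : (E.card : ℝ) = a * ∏ i ∈ Finset.Ico 2 (k + 1), ((n : ℝ) ^ r ^ i)) :
    (({A : (i : Fin k) → Finset (Fin (n ^ r ^ ((i : ℕ) + 1))) |
        (∀ i, (A i).card = r) ∧
        ∀ g : (i : Fin k) → Fin (n ^ r ^ ((i : ℕ) + 1)),
          (∀ i, g i ∈ A i) → g ∈ E}).ncard : ℝ) ≥
      rchoose a r * ∏ i ∈ Finset.Ico 1 k, (((n ^ r ^ i).choose r : ℕ) : ℝ) := by
  obtain ⟨k, rfl⟩ := Nat.exists_eq_add_of_le' hk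
  set N : Fin (k + 1) → ℕ := fun i => n ^ r ^ ((i : ℕ) + 1)
  have hN : ∀ i : Fin k, N i.castSucc ^ r ≤ N i.succ := fun i => by
    simp [N, ← pow_mul, ← pow_succ]
  rw [show Ico 2 (k + 1 + 1) = Ico 2 (2 + k) by rw [add_comm 2 k], prod_Ico_eq_prod_fin] at hE
  have key := rchoose_mul_prod_choose_le_card_copies (Nat.one_le_iff_ne_zero.1 hr) N hN E ha
    (by simpa [N, add_assoc] using hE)
  rw [ge_iff_le, show Ico 1 (k + 1) = Ico 1 (1 + k) by rw [add_comm 1 k], prod_Ico_eq_prod_fin]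
  convert key using 2
  · simp [N]
  · rw [← Set.ncard_coe_finset]
    congr 1
    ext A
    simp [mem_copies, N]
end

section
/- Let 2 <= r, k, q = (r^k-1)/(r-1), and let G be the complete k-partite k-uniform hypergraph with parts U_1,...,U_k where |U_i| = m^{r^{i-1}/q} (assume these are integers). Then G has m edges, and every K^{(k)}_{r,...,r}-free subhypergraph of G has at most r * m^{(q-1)/q} edges. -/
/-!
Split off the first part `U₁` (of size `t`, where `m = t ^ q`). For a transversal `b` of the
remaining parts let `N b ⊆ U₁` be its neighbourhood in `E`. Then
`|E| = ∑_b |N b| ≤ ∑_b C(|N b|, r) + (r - 1) ∏_{i ≥ 2} |U_i|`, and `∑_b C(|N b|, r)` counts the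
pairs `(S, b)` with `S ⊆ N b`, `|S| = r`. For fixed `S` these `b` form a `K_{r,…,r}`-free
subhypergraph of the remaining `k - 1` parts, whose sizes are `(t ^ r) ^ (r ^ (i - 1))`, i.e.
an instance of the same problem with `t ^ r` in place of `t`. Induction and `r C(t, r) ≤ t ^ r`
then give `|E| ≤ r t ^ (q - 1)`.
-/

open Finset Fintype

theorem Nat.le_choose_add_sub_one {r : ℕ} (hr : 1 ≤ r) (n : ℕ) : n ≤ n.choose r + (r - 1) := by
  obtain ⟨r, rfl⟩ : ∃ s, r = s + 1 := ⟨r - 1, by omega⟩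
  induction n with
  | zero => exact Nat.zero_le _
  | succ n ih =>
    rcases Nat.lt_or_ge n r with h | h
    · omega
    · have := Nat.choose_pos h
      have := Nat.choose_succ_succ' n r
      omega

theorem Nat.mul_choose_le_pow (n r : ℕ) : r * n.choose r ≤ n ^ r :=
  calc r * n.choose r ≤ r.factorial * n.choose r :=
        Nat.mul_le_mul_right _ (Nat.self_le_factorial r)
    _ = n.descFactorial r := (Nat.descFactorial_eq_factorial_mul_choose n r).symm
    _ ≤ n ^ r := Nat.descFactorial_le_pow n r

section Bipartite

variable {α β : Type*} [Fintype α] [Fintype β] [DecidableEq α] [DecidableEq β]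

theorem card_le_choose_mul_add_of_card_common_le {r : ℕ} (L : ℕ) (hr : 1 ≤ r)
    (E : Finset (α × β)) (hL : ∀ S : Finset α, #S = r → #{b | ∀ a ∈ S, (a, b) ∈ E} ≤ L) :
    #E ≤ (card α).choose r * L + (r - 1) * card β := by
  set N : β → Finset α := fun b => {a | (a, b) ∈ E}
  have hE : #E = ∑ b, #(N b) := by
    rw [← filter_univ_mem E, card_filter, Fintype.sum_prod_type, sum_comm]
    simp only [N, card_filter]
  have hdouble : ∑ S ∈ powersetCard r univ, #{b | S ⊆ N b} = ∑ b, (#(N b)).choose r := by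
    refine (sum_card_bipartiteAbove_eq_sum_card_bipartiteBelow (fun S b => S ⊆ N b)).trans ?_
    refine sum_congr rfl fun b _ => ?_
    have : (powersetCard r univ).bipartiteBelow (fun S b => S ⊆ N b) b = powersetCard r (N b) := by
      ext S; simp [and_comm]
    rw [this, card_powersetCard]
  have hcommon (S : Finset α) (hS : S ∈ powersetCard r univ) : #{b | S ⊆ N b} ≤ L := by
    convert hL S (mem_powersetCard.1 hS).2 using 3
    simp [N, subset_iff]
  calc #E = ∑ b, #(N b) := hE
    _ ≤ ∑ b, ((#(N b)).choose r + (r - 1)) :=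
      sum_le_sum fun b _ => Nat.le_choose_add_sub_one hr _
    _ = ∑ S ∈ powersetCard r univ, #{b | S ⊆ N b} + (r - 1) * card β := by
      rw [sum_add_distrib, hdouble, sum_const, card_univ, smul_eq_mul, mul_comm]
    _ ≤ (card α).choose r * L + (r - 1) * card β := by
      gcongr
      simpa using sum_le_card_nsmul _ _ _ hcommon

end Bipartite

def ContainsCompletePartite {k : ℕ} {α : Fin k → Type*} (r : ℕ) (E : Finset (∀ i, α i)) : Prop :=
  ∃ A : ∀ i, Finset (α i), (∀ i, #(A i) = r) ∧ piFinset A ⊆ E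

theorem eq_empty_of_not_containsCompletePartite {α : Fin 0 → Type*} {r : ℕ}
    {E : Finset (∀ i, α i)} (hE : ¬ ContainsCompletePartite r E) : E = ∅ := by
  refine eq_empty_of_forall_notMem fun g hg => hE ⟨fun i => i.elim0, fun i => i.elim0, ?_⟩
  intro g' _
  rwa [Subsingleton.elim g' g]

section Succ

variable {k r : ℕ} {α : Fin (k + 1) → Type*} [∀ i, Fintype (α i)] [∀ i, DecidableEq (α i)]

theorem containsCompletePartite_of_link {E : Finset (∀ i, α i)} {S : Finset (α 0)} (hS : #S = r)
    (h : ContainsCompletePartite r ({b | ∀ a ∈ S, Fin.cons a b ∈ E} : Finset (∀ j, α j.succ))) :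
    ContainsCompletePartite r E := by
  obtain ⟨A, hA, hAE⟩ := h
  refine ⟨Fin.cons S A, Fin.cases hS hA, fun g hg => ?_⟩
  rw [← Fin.cons_self_tail g, Fin.cons_mem_piFinset_cons] at hg
  simpa using (mem_filter.1 (hAE hg.2)).2 _ hg.1

theorem card_le_choose_mul_add_of_not_containsCompletePartite (hr : 1 ≤ r) (L : ℕ)
    (hL : ∀ E : Finset (∀ j, α j.succ), ¬ ContainsCompletePartite r E → #E ≤ L)
    {E : Finset (∀ i, α i)} (hE : ¬ ContainsCompletePartite r E) :
    #E ≤ (card (α 0)).choose r * L + (r - 1) * ∏ j : Fin k, card (α j.succ) := by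
  rw [← Fintype.card_pi, ← card_map (Fin.consEquiv α).symm.toEmbedding]
  refine card_le_choose_mul_add_of_card_common_le L hr _ fun S hS =>
    hL _ fun h => hE (containsCompletePartite_of_link hS ?_)
  convert h using 3
  simp only [mem_map_equiv, Equiv.symm_symm]
  rfl

end Succ

theorem prod_pow_pow_succ (k r t : ℕ) :
    ∏ j : Fin k, t ^ r ^ ((j : ℕ) + 1) = t ^ (r * ∑ i ∈ range k, r ^ i) := by
  rw [prod_pow_eq_pow_sum, Fin.sum_univ_eq_sum_range (fun i => r ^ (i + 1)), mul_sum]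
  simp only [pow_succ']

theorem add_sub_one_mul_le {a x r : ℕ} (hr : 1 ≤ r) (ha : a ≤ x) : a + (r - 1) * x ≤ r * x :=
  calc a + (r - 1) * x ≤ x + (r - 1) * x := by gcongr
    _ = r * x := by rw [← one_add_mul, Nat.add_sub_cancel' hr]

theorem card_le_of_not_containsCompletePartite_succ {k r t : ℕ} (hr : 1 ≤ r)
    {α : Fin (k + 1) → Type*} [∀ i, Fintype (α i)] [∀ i, DecidableEq (α i)]
    (hα : ∀ i, card (α i) = t ^ r ^ (i : ℕ)) {E : Finset (∀ i, α i)}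
    (hE : ¬ ContainsCompletePartite r E) : #E ≤ r * t ^ (r * ∑ i ∈ range k, r ^ i) := by
  induction k generalizing t with
  | zero =>
    have hL (E' : Finset (∀ j, α j.succ)) (hE' : ¬ ContainsCompletePartite r E') : #E' ≤ 0 := by
      rw [eq_empty_of_not_containsCompletePartite hE', Finset.card_empty]
    refine (card_le_choose_mul_add_of_not_containsCompletePartite hr 0 hL hE).trans ?_
    simp
  | succ k ih =>
    have hL (E' : Finset (∀ j, α j.succ)) (hE' : ¬ ContainsCompletePartite r E') :
        #E' ≤ r * (t ^ r) ^ (r * ∑ i ∈ range k, r ^ i) :=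
      ih (fun j => by rw [hα, Fin.val_succ, pow_succ', pow_mul]) hE'
    refine (card_le_choose_mul_add_of_not_containsCompletePartite hr _ hL hE).trans ?_
    simp only [hα, Fin.val_zero, pow_zero, pow_one, Fin.val_succ, prod_pow_pow_succ]
    refine add_sub_one_mul_le hr ?_
    calc t.choose r * (r * (t ^ r) ^ (r * ∑ i ∈ range k, r ^ i))
        = r * t.choose r * (t ^ r) ^ (r * ∑ i ∈ range k, r ^ i) := by ring
      _ ≤ t ^ r * (t ^ r) ^ (r * ∑ i ∈ range k, r ^ i) := by
        gcongr
        exact Nat.mul_choose_le_pow t r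
      _ = t ^ (r * ∑ i ∈ range (k + 1), r ^ i) := by
        rw [geom_sum_succ, ← pow_mul, ← pow_add]
        ring_nf

theorem card_le_of_not_containsCompletePartite {k r t : ℕ} (hr : 1 ≤ r) {α : Fin k → Type*}
    [∀ i, Fintype (α i)] [∀ i, DecidableEq (α i)] (hα : ∀ i, card (α i) = t ^ r ^ (i : ℕ))
    {E : Finset (∀ i, α i)} (hE : ¬ ContainsCompletePartite r E) :
    #E ≤ r * t ^ (∑ i ∈ range k, r ^ i - 1) := by
  cases k with
  | zero => simp [eq_empty_of_not_containsCompletePartite hE]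
  | succ k =>
    rw [geom_sum_succ, Nat.add_sub_cancel]
    exact card_le_of_not_containsCompletePartite_succ hr hα hE

theorem stmt10_general (k r q t m : ℕ) (hr : 2 ≤ r)
    (hq : q = ∑ i ∈ Finset.range k, r ^ i) (hm : m = t ^ q) :
    (Finset.univ : Finset ((i : Fin k) → Fin (t ^ r ^ (i : ℕ)))).card = m ∧
    ∀ E : Finset ((i : Fin k) → Fin (t ^ r ^ (i : ℕ))),
      (¬ ∃ A : (i : Fin k) → Finset (Fin (t ^ r ^ (i : ℕ))),
        (∀ i, (A i).card = r) ∧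
        ∀ g : (i : Fin k) → Fin (t ^ r ^ (i : ℕ)), (∀ i, g i ∈ A i) → g ∈ E) →
      E.card ≤ r * t ^ (q - 1) := by
  refine ⟨?_, fun E hE => ?_⟩
  · rw [card_univ, Fintype.card_pi]
    simp only [Fintype.card_fin]
    rw [prod_pow_eq_pow_sum, Fin.sum_univ_eq_sum_range, ← hq, hm]
  · subst hq
    exact card_le_of_not_containsCompletePartite (by omega) (fun i => Fintype.card_fin _)
      fun ⟨A, hA, hAE⟩ => hE ⟨A, hA, fun g hg => hAE (mem_piFinset.2 hg)⟩

/-- The complete `k`-partite `k`-graph with parts of sizes `|U_i| = t^(r^(i-1))`, where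
`m = t^q` and `q = 1 + r + ⋯ + r^(k-1)`, has `m` edges, and every `K^(k)_{r,…,r}`-free
subhypergraph of it has at most `r * m^((q-1)/q) = r * t^(q-1)` edges. Edges are modelled
as transversal functions picking one vertex per part. -/
theorem stmt10 (k r q t m : ℕ) (hk : 2 ≤ k) (hr : 2 ≤ r)
    (hq : q = ∑ i ∈ Finset.range k, r ^ i) (hm : m = t ^ q) :
    (Finset.univ : Finset ((i : Fin k) → Fin (t ^ r ^ (i : ℕ)))).card = m ∧
    ∀ E : Finset ((i : Fin k) → Fin (t ^ r ^ (i : ℕ))),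
      (¬ ∃ A : (i : Fin k) → Finset (Fin (t ^ r ^ (i : ℕ))),
        (∀ i, (A i).card = r) ∧
        ∀ g : (i : Fin k) → Fin (t ^ r ^ (i : ℕ)), (∀ i, g i ∈ A i) → g ∈ E) →
      E.card ≤ r * t ^ (q - 1) :=
  stmt10_general k r q t m hr hq hm
end

section
/- Every graph G with m edges contains a C_4-free subgraph with at least (1/4) * m^{2/3} edges. -/
/-!
Deletion method. A uniformly random `s`-set of the `m` edges contains a fixed 4-cycle with
probability `C(s,4)/C(m,4) ≤ (s/m)^4`, and `G` has at most `2m²` four-cycles, because a 4-cycle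
is determined up to reflection by an ordered pair of opposite darts. So some `s`-set of edges
contains at most `2s⁴/m²` four-cycles, and deleting one edge from each leaves a `C₄`-free graph
with at least `s - 2s⁴/m²` edges; `s = ⌊m^{2/3}/2⌋` gives `3m^{2/3}/8 - 1 ≥ m^{2/3}/4` once
`m^{2/3} ≥ 8`. Below that, any three edges will do.
-/

open Finset

theorem Nat.descFactorial_mul_pow_le_descFactorial_mul_pow {s m : ℕ} (h : s ≤ m) :
    ∀ k, s.descFactorial k * m ^ k ≤ m.descFactorial k * s ^ k
  | 0 => by simp
  | k + 1 => by
    have hk : (s - k) * m ≤ (m - k) * s := by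
      rw [Nat.sub_mul, Nat.sub_mul, mul_comm m s]
      exact Nat.sub_le_sub_left (Nat.mul_le_mul_left k h) _
    calc s.descFactorial (k + 1) * m ^ (k + 1)
        = ((s - k) * m) * (s.descFactorial k * m ^ k) := by
          rw [Nat.descFactorial_succ, pow_succ]; ring
      _ ≤ ((m - k) * s) * (m.descFactorial k * s ^ k) :=
          Nat.mul_le_mul hk (descFactorial_mul_pow_le_descFactorial_mul_pow h k)
      _ = m.descFactorial (k + 1) * s ^ (k + 1) := by
          rw [Nat.descFactorial_succ, pow_succ]; ring

theorem Nat.choose_mul_pow_le_choose_mul_pow {s m : ℕ} (h : s ≤ m) (k : ℕ) :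
    s.choose k * m ^ k ≤ m.choose k * s ^ k := by
  have := descFactorial_mul_pow_le_descFactorial_mul_pow h k
  rw [descFactorial_eq_factorial_mul_choose, descFactorial_eq_factorial_mul_choose, mul_assoc,
    mul_assoc] at this
  exact Nat.le_of_mul_le_mul_left this k.factorial_pos

theorem Nat.choose_sub_mul_pow_le_choose_mul_pow {k s m : ℕ} (hks : k ≤ s) (hsm : s ≤ m) :
    (m - k).choose (s - k) * m ^ k ≤ m.choose s * s ^ k := by
  refine Nat.le_of_mul_le_mul_left ?_ (Nat.choose_pos (hks.trans hsm))
  calc m.choose k * ((m - k).choose (s - k) * m ^ k)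
      = m.choose s * (s.choose k * m ^ k) := by rw [← mul_assoc, ← Nat.choose_mul hks]; ring
    _ ≤ m.choose s * (m.choose k * s ^ k) :=
        Nat.mul_le_mul_left _ (choose_mul_pow_le_choose_mul_pow hsm k)
    _ = m.choose k * (m.choose s * s ^ k) := by ring

namespace Finset

variable {α : Type*} [DecidableEq α] {E : Finset α} {𝒞 : Finset (Finset α)} {k s : ℕ}

theorem exists_mem_powersetCard_card_filter_subset_mul_pow_le (h𝒞 : 𝒞 ⊆ E.powersetCard k)
    (hks : k ≤ s) (hsE : s ≤ #E) :
    ∃ S ∈ E.powersetCard s, #{C ∈ 𝒞 | C ⊆ S} * #E ^ k ≤ #𝒞 * s ^ k := by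
  set P := E.powersetCard s
  have hcount : ∑ S ∈ P, #{C ∈ 𝒞 | C ⊆ S} = #𝒞 * (#E - k).choose (s - k) := by
    have := sum_card_bipartiteAbove_eq_sum_card_bipartiteBelow (s := 𝒞) (t := P)
      (r := fun C S : Finset α => C ⊆ S)
    simp only [bipartiteAbove, bipartiteBelow] at this
    rw [← this, ← smul_eq_mul, ← sum_const]
    refine sum_congr rfl fun C hC => ?_
    obtain ⟨hCE, rfl⟩ := mem_powersetCard.1 (h𝒞 hC)
    exact card_filter_powersetCard_subset C E s hCE hks
  obtain ⟨S, hS, hSle⟩ := exists_le_of_sum_le (powersetCard_nonempty.2 hsE)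
    (f := fun S => #{C ∈ 𝒞 | C ⊆ S} * (#E).choose s)
    (g := fun _ => #𝒞 * (#E - k).choose (s - k)) (by
      rw [← sum_mul, hcount, sum_const, card_powersetCard, smul_eq_mul, mul_comm])
  refine ⟨S, hS, Nat.le_of_mul_le_mul_left ?_ (Nat.choose_pos hsE)⟩
  calc (#E).choose s * (#{C ∈ 𝒞 | C ⊆ S} * #E ^ k)
      = #{C ∈ 𝒞 | C ⊆ S} * (#E).choose s * #E ^ k := by ring
    _ ≤ #𝒞 * ((#E - k).choose (s - k) * #E ^ k) := by
        rw [← mul_assoc]; exact Nat.mul_le_mul_right _ hSle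
    _ ≤ #𝒞 * ((#E).choose s * s ^ k) :=
        Nat.mul_le_mul_left _ (Nat.choose_sub_mul_pow_le_choose_mul_pow hks hsE)
    _ = (#E).choose s * (#𝒞 * s ^ k) := by ring

theorem exists_subset_card_le_forall_exists_mem {𝒟 : Finset (Finset α)}
    (h𝒟 : ∀ D ∈ 𝒟, D.Nonempty) : ∃ B : Finset α, #B ≤ #𝒟 ∧ ∀ D ∈ 𝒟, ∃ x ∈ D, x ∈ B := by
  choose x hx using h𝒟
  exact ⟨𝒟.attach.image fun D => x D.1 D.2, card_image_le.trans card_attach.le,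
    fun D hD => ⟨x D hD, hx D hD, mem_image.2 ⟨⟨D, hD⟩, mem_attach _ _, rfl⟩⟩⟩

theorem exists_subset_forall_not_subset_card_ge (hk : 0 < k) (h𝒞 : 𝒞 ⊆ E.powersetCard k)
    (hks : k ≤ s) (hsE : s ≤ #E) :
    ∃ T ⊆ E, (∀ C ∈ 𝒞, ¬ C ⊆ T) ∧ (s : ℝ) - #𝒞 * (s / #E) ^ k ≤ #T := by
  obtain ⟨S, hS, hcount⟩ := exists_mem_powersetCard_card_filter_subset_mul_pow_le h𝒞 hks hsE
  obtain ⟨hSE, rfl⟩ := mem_powersetCard.1 hS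
  obtain ⟨B, hB, hBhit⟩ := exists_subset_card_le_forall_exists_mem (𝒟 := {C ∈ 𝒞 | C ⊆ S})
    fun C hC => card_pos.1 <| by rw [(mem_powersetCard.1 (h𝒞 (mem_filter.1 hC).1)).2]; exact hk
  refine ⟨S \ B, sdiff_subset.trans hSE, fun C hC hCT => ?_, ?_⟩
  · obtain ⟨x, hxC, hxB⟩ := hBhit C (mem_filter.2 ⟨hC, hCT.trans sdiff_subset⟩)
    exact (mem_sdiff.1 (hCT hxC)).2 hxB
  · have hE : (0 : ℝ) < #E := by exact_mod_cast hk.trans_le (hks.trans hsE)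
    have hcountR : (#{C ∈ 𝒞 | C ⊆ S} : ℝ) ≤ #𝒞 * (#S / #E) ^ k := by
      rw [div_pow, mul_div_assoc', le_div_iff₀ (pow_pos hE k)]
      exact_mod_cast hcount
    have hsdiff : (#S : ℝ) ≤ #(S \ B) + #B := by exact_mod_cast card_le_card_sdiff_add_card
    have hBR : (#B : ℝ) ≤ #{C ∈ 𝒞 | C ⊆ S} := by exact_mod_cast hB
    linarith

end Finset

namespace SimpleGraph

variable {V : Type*}

def FourCycleFree (G : SimpleGraph V) : Prop :=
  ¬ ∃ a b c d : V, a ≠ c ∧ b ≠ d ∧ G.Adj a b ∧ G.Adj b c ∧ G.Adj c d ∧ G.Adj d a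

variable [DecidableEq V]

def fourCycleEdges (q : V × V × V × V) : Finset (Sym2 V) :=
  {s(q.1, q.2.1), s(q.2.1, q.2.2.1), s(q.2.2.1, q.2.2.2), s(q.2.2.2, q.1)}

variable [Fintype V] (G : SimpleGraph V) [DecidableRel G.Adj]

def fourCycleTuples : Finset (V × V × V × V) :=
  {q | q.1 ≠ q.2.2.1 ∧ q.2.1 ≠ q.2.2.2 ∧
    G.Adj q.1 q.2.1 ∧ G.Adj q.2.1 q.2.2.1 ∧ G.Adj q.2.2.1 q.2.2.2 ∧ G.Adj q.2.2.2 q.1}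

def fourCycles : Finset (Finset (Sym2 V)) :=
  G.fourCycleTuples.image fourCycleEdges

variable {G}

@[simp]
theorem mem_fourCycleTuples {a b c d : V} :
    (a, b, c, d) ∈ G.fourCycleTuples ↔
      a ≠ c ∧ b ≠ d ∧ G.Adj a b ∧ G.Adj b c ∧ G.Adj c d ∧ G.Adj d a := by
  simp [fourCycleTuples]

theorem fourCycleEdges_mem_powersetCard {q : V × V × V × V} (hq : q ∈ G.fourCycleTuples) :
    fourCycleEdges q ∈ G.edgeFinset.powersetCard 4 := by
  obtain ⟨a, b, c, d⟩ := q
  obtain ⟨hac, hbd, hab, hbc, hcd, hda⟩ := mem_fourCycleTuples.1 hq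
  have := hab.ne; have := hbc.ne; have := hcd.ne; have := hda.ne
  rw [mem_powersetCard, fourCycleEdges]
  constructor
  · simp [insert_subset_iff, hab, hbc, hcd, hda]
  · rw [card_insert_of_notMem, card_insert_of_notMem, card_pair] <;>
      simp <;> grind

theorem fourCycles_subset_powersetCard : G.fourCycles ⊆ G.edgeFinset.powersetCard 4 :=
  image_subset_iff.2 fun _ => fourCycleEdges_mem_powersetCard

theorem card_fourCycleTuples_le : #G.fourCycleTuples ≤ (2 * #G.edgeFinset) ^ 2 := by
  calc #G.fourCycleTuples
      ≤ #((univ : Finset (G.Dart × G.Dart)).image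
          fun p => (p.1.fst, p.1.snd, p.2.fst, p.2.snd)) := by
        refine card_le_card fun ⟨a, b, c, d⟩ hq => mem_image.2 ?_
        obtain ⟨-, -, hab, -, hcd, -⟩ := mem_fourCycleTuples.1 hq
        exact ⟨(⟨(a, b), hab⟩, ⟨(c, d), hcd⟩), mem_univ _, rfl⟩
    _ ≤ Fintype.card G.Dart ^ 2 := by
        rw [sq, ← Fintype.card_prod]; exact card_image_le
    _ = (2 * #G.edgeFinset) ^ 2 := by rw [dart_card_eq_twice_card_edges]

theorem two_mul_card_fourCycles_le : 2 * #G.fourCycles ≤ #G.fourCycleTuples := by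
  refine mul_card_image_le_card _ 2 fun C hC => ?_
  obtain ⟨⟨a, b, c, d⟩, hq, rfl⟩ := mem_image.1 hC
  obtain ⟨hac, hbd, hab, hbc, hcd, hda⟩ := mem_fourCycleTuples.1 hq
  have hrev : (a, d, c, b) ∈ G.fourCycleTuples :=
    mem_fourCycleTuples.2 ⟨hac, hbd.symm, hda.symm, hcd.symm, hbc.symm, hab.symm⟩
  have hpair : ({(a, b, c, d), (a, d, c, b)} : Finset (V × V × V × V)) ⊆
      {q ∈ G.fourCycleTuples | fourCycleEdges q = fourCycleEdges (a, b, c, d)} := by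
    refine insert_subset_iff.2 ⟨mem_filter.2 ⟨hq, rfl⟩, singleton_subset_iff.2 ?_⟩
    refine mem_filter.2 ⟨hrev, ?_⟩
    ext e
    simp only [fourCycleEdges, mem_insert, mem_singleton, Sym2.eq_swap]
    tauto
  exact (card_pair (by simp [hbd])).ge.trans (card_le_card hpair)

theorem card_fourCycles_le : #G.fourCycles ≤ 2 * #G.edgeFinset ^ 2 := by
  have := two_mul_card_fourCycles_le.trans (card_fourCycleTuples_le (G := G))
  rw [mul_pow] at this
  omega

theorem fourCycleFree_fromEdgeSet {T : Finset (Sym2 V)} (hT : T ⊆ G.edgeFinset)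
    (hfree : ∀ C ∈ G.fourCycles, ¬ C ⊆ T) : (fromEdgeSet (T : Set (Sym2 V))).FourCycleFree := by
  rintro ⟨a, b, c, d, hac, hbd, hab, hbc, hcd, hda⟩
  simp only [fromEdgeSet_adj, mem_coe] at hab hbc hcd hda
  have hG {u v : V} (h : s(u, v) ∈ T) : G.Adj u v := mem_edgeFinset.1 (hT h)
  refine hfree _ (mem_image_of_mem _ (mem_fourCycleTuples.2
    ⟨hac, hbd, hG hab.1, hG hbc.1, hG hcd.1, hG hda.1⟩)) ?_
  simp [fourCycleEdges, insert_subset_iff, hab.1, hbc.1, hcd.1, hda.1]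

theorem exists_fourCycleFree_le_ncard_eq {T : Finset (Sym2 V)} (hT : T ⊆ G.edgeFinset)
    (hfree : ∀ C ∈ G.fourCycles, ¬ C ⊆ T) :
    ∃ H ≤ G, H.FourCycleFree ∧ H.edgeSet.ncard = #T := by
  have hdiag : Disjoint (T : Set (Sym2 V)) Sym2.diagSet :=
    Set.disjoint_left.2 fun e he => G.not_isDiag_of_mem_edgeSet (mem_edgeFinset.1 (hT he))
  refine ⟨fromEdgeSet T, ?_, fourCycleFree_fromEdgeSet hT hfree, ?_⟩
  · rw [fromEdgeSet_le, hdiag.sdiff_eq_left, ← coe_edgeFinset]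
    exact coe_subset.2 hT
  · rw [edgeSet_fromEdgeSet, hdiag.sdiff_eq_left, Set.ncard_coe_finset]

theorem exists_fourCycleFree_le_ncard_eq_of_le_three {s : ℕ} (hs : s ≤ 3)
    (hsE : s ≤ #G.edgeFinset) : ∃ H ≤ G, H.FourCycleFree ∧ H.edgeSet.ncard = s := by
  obtain ⟨T, hT, rfl⟩ := exists_subset_card_eq hsE
  refine exists_fourCycleFree_le_ncard_eq hT fun C hC hCT => ?_
  have := card_le_card hCT
  rw [(mem_powersetCard.1 (fourCycles_subset_powersetCard hC)).2] at this
  omega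

theorem exists_fourCycleFree_le_ncard_ge {s : ℕ} (hs : 4 ≤ s) (hsE : s ≤ #G.edgeFinset) :
    ∃ H ≤ G, H.FourCycleFree ∧ (s : ℝ) - 2 * s ^ 4 / #G.edgeFinset ^ 2 ≤ H.edgeSet.ncard := by
  obtain ⟨T, hT, hfree, hTcard⟩ :=
    exists_subset_forall_not_subset_card_ge (by norm_num) fourCycles_subset_powersetCard hs hsE
  obtain ⟨H, hHG, hH, hHcard⟩ := exists_fourCycleFree_le_ncard_eq hT hfree
  refine ⟨H, hHG, hH, ?_⟩
  have hE : (0 : ℝ) < #G.edgeFinset := by exact_mod_cast (by omega : 0 < #G.edgeFinset)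
  have hcycles : (#G.fourCycles : ℝ) ≤ 2 * #G.edgeFinset ^ 2 := by
    exact_mod_cast card_fourCycles_le
  calc (s : ℝ) - 2 * s ^ 4 / #G.edgeFinset ^ 2
      = s - 2 * (#G.edgeFinset : ℝ) ^ 2 * (s / #G.edgeFinset) ^ 4 := by field_simp
    _ ≤ s - #G.fourCycles * ((s : ℝ) / #G.edgeFinset) ^ 4 := by gcongr
    _ ≤ H.edgeSet.ncard := by rw [hHcard]; exact hTcard

end SimpleGraph

theorem Real.rpow_two_thirds_pow_three {x : ℝ} (hx : 0 ≤ x) : (x ^ (2 / 3 : ℝ)) ^ 3 = x ^ 2 := by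
  rw [← Real.rpow_mul_natCast hx]; norm_num

theorem Nat.cast_rpow_two_thirds_le (m : ℕ) : (m : ℝ) ^ (2 / 3 : ℝ) ≤ m := by
  rcases m.eq_zero_or_pos with rfl | hm
  · simp
  · exact Real.rpow_le_self_of_one_le (by exact_mod_cast hm) (by norm_num)

open SimpleGraph in
/-- Every graph `G` with `m` edges contains a `C₄`-free subgraph with at least
`(1/4) * m^(2/3)` edges. -/
theorem stmt11 {V : Type*} [Fintype V] (G : SimpleGraph V) (m : ℕ)
    (hm : G.edgeSet.ncard = m) :
    ∃ H : SimpleGraph V, H ≤ G ∧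
      (¬ ∃ a b c d : V, a ≠ c ∧ b ≠ d ∧
        H.Adj a b ∧ H.Adj b c ∧ H.Adj c d ∧ H.Adj d a) ∧
      (H.edgeSet.ncard : ℝ) ≥ (1 / 4) * (m : ℝ) ^ ((2 : ℝ) / 3) := by
  classical
  have hE : #G.edgeFinset = m := by rw [← hm, ← coe_edgeFinset, Set.ncard_coe_finset]
  set M := (m : ℝ) ^ ((2 : ℝ) / 3)
  have hM3 : M ^ 3 = (m : ℝ) ^ 2 := Real.rpow_two_thirds_pow_three m.cast_nonneg
  have hMm : M ≤ m := m.cast_rpow_two_thirds_le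
  rcases le_or_gt M 12 with hM | hM
  · obtain ⟨H, hHG, hH, hcard⟩ :=
      G.exists_fourCycleFree_le_ncard_eq_of_le_three (min_le_right m 3) (hE ▸ min_le_left m 3)
    refine ⟨H, hHG, hH, ?_⟩
    rw [hcard, ge_iff_le, Nat.cast_min]
    exact le_min (by linarith) (by norm_num; linarith)
  · set s := ⌊M / 2⌋₊
    have hs : (s : ℝ) ≤ M / 2 := Nat.floor_le (by linarith)
    have hs' : M / 2 < s + 1 := Nat.lt_floor_add_one _
    have hs4 : 4 ≤ s := Nat.le_floor (by push_cast; linarith)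
    have hsm : s ≤ m := Nat.floor_le_of_le (by linarith)
    obtain ⟨H, hHG, hH, hcard⟩ := G.exists_fourCycleFree_le_ncard_ge hs4 (hE ▸ hsm)
    refine ⟨H, hHG, hH, ?_⟩
    rw [hE] at hcard
    have hloss : 2 * (s : ℝ) ^ 4 / m ^ 2 ≤ M / 8 := by
      rw [div_le_iff₀ (by rw [← hM3]; positivity)]
      calc 2 * (s : ℝ) ^ 4 ≤ 2 * (M / 2) ^ 4 := by gcongr
        _ = M / 8 * M ^ 3 := by ring
        _ = M / 8 * m ^ 2 := by rw [hM3]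
    linarith
end

section
/- For integers k >= 2 and r >= 2, with q = 1 + r + ... + r^{k-1}, and p = (1/2) * m^{-1/q} with m >= 1, one has p*m - (k!)^r * p^{r^k} * binomial(m, r) >= (1/4) * m^{(q-1)/q}. -/
/-!
Since `r ^ k = (r - 1) * q + 1`, the exponent of `m` in `p ^ (r ^ k) * m ^ r` is
`r - r ^ k / q = (q - 1) / q`, the same as in `p * m`. Bounding `C(m, r) ≤ m ^ r`, both terms are
multiples of `m ^ ((q - 1) / q)`, with coefficients `1 / 2` and `k! ^ r / 2 ^ (r ^ k) ≤ 1 / 4`; the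
last bound follows from `k! ≤ 2 ^ C(k, 2)` and `r * C(k, 2) + 2 ≤ r ^ k`.
-/

open Nat

theorem Nat.factorial_le_two_pow_choose_two (k : ℕ) : k ! ≤ 2 ^ k.choose 2 := by
  induction k with
  | zero => simp
  | succ k ih =>
    rw [factorial_succ, choose_succ_succ', choose_one_right, pow_add]
    exact Nat.mul_le_mul Nat.lt_two_pow_self ih

theorem Nat.mul_le_pow_of_two_le {r : ℕ} (hr : 2 ≤ r) (k : ℕ) : r * k ≤ r ^ k := by
  cases k with
  | zero => simp
  | succ k =>
    rw [pow_succ', mul_le_mul_iff_right₀ (by omega)]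
    exact Nat.lt_two_pow_self.trans_le (Nat.pow_le_pow_left hr k)

theorem Nat.mul_choose_two_add_two_le_pow {r k : ℕ} (hr : 2 ≤ r) (hk : 1 ≤ k) :
    r * k.choose 2 + 2 ≤ r ^ k := by
  induction k, hk using Nat.le_induction with
  | base => simpa using hr
  | succ k _ ih =>
    have := mul_le_pow_of_two_le hr k
    rw [choose_succ_succ', choose_one_right, one_add_one_eq_two, pow_succ]
    nlinarith [Nat.mul_le_mul_left (r ^ k) hr]

theorem Nat.four_mul_factorial_pow_le_two_pow {r k : ℕ} (hr : 2 ≤ r) (hk : 1 ≤ k) :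
    4 * k ! ^ r ≤ 2 ^ r ^ k :=
  calc 4 * k ! ^ r ≤ 2 ^ 2 * (2 ^ k.choose 2) ^ r := by
        gcongr; exacts [by norm_num, factorial_le_two_pow_choose_two k]
    _ = 2 ^ (r * k.choose 2 + 2) := by ring
    _ ≤ 2 ^ r ^ k := Nat.pow_le_pow_right two_pos (mul_choose_two_add_two_le_pow hr hk)

theorem Real.rpow_neg_one_div_pow_mul_pow {x : ℝ} (hx : 0 < x) (q : ℝ) (n r : ℕ) :
    (x ^ (-1 / q)) ^ n * x ^ r = x ^ (r - n / q) := by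
  rw [← rpow_natCast, ← rpow_mul hx.le, ← rpow_natCast x r, ← rpow_add hx]
  ring_nf

theorem Nat.factorial_pow_mul_half_pow_le {r k : ℕ} (hr : 2 ≤ r) (hk : 1 ≤ k) :
    (k ! : ℝ) ^ r * (1 / 2) ^ (r ^ k) ≤ 1 / 4 := by
  have : (4 : ℝ) * k ! ^ r ≤ 2 ^ r ^ k := by
    exact_mod_cast four_mul_factorial_pow_le_two_pow hr hk
  rw [one_div, inv_pow, ← div_eq_mul_inv, div_le_iff₀ (by positivity)]
  linarith

/-- The key numerical inequality in the hypergraph deletion argument: for `k, r ≥ 2`,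
`q = 1 + r + ⋯ + r^(k-1)`, `m ≥ 1` and `p = (1/2) * m^(-1/q)`,
`p*m - (k!)^r * p^(r^k) * C(m,r) ≥ (1/4) * m^((q-1)/q)`. -/
theorem stmt14 (k r q m : ℕ) (hk : 2 ≤ k) (hr : 2 ≤ r)
    (hq : q = ∑ i ∈ Finset.range k, r ^ i) (hm : 1 ≤ m) (p : ℝ)
    (hp : p = (1 / 2) * (m : ℝ) ^ (-(1 : ℝ) / q)) :
    p * m - (k.factorial : ℝ) ^ r * p ^ (r ^ k) * (m.choose r : ℝ) ≥
      (1 / 4) * (m : ℝ) ^ (((q : ℝ) - 1) / q) := by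
  have hm₀ : (0 : ℝ) < m := by exact_mod_cast hm
  have hgeom : (q : ℝ) * (r - 1) = r ^ k - 1 := by
    rw [hq]; push_cast; exact geom_sum_mul _ _
  have hq₀ : (q : ℝ) ≠ 0 := by
    rw [hq, Nat.cast_ne_zero, ← Nat.pos_iff_ne_zero]
    exact Finset.sum_pos (fun i _ => pow_pos (by omega) i) (by simp; omega)
  set M := (m : ℝ) ^ (((q : ℝ) - 1) / q)
  have hpm : p * m = 1 / 2 * M := by
    have := Real.rpow_neg_one_div_pow_mul_pow hm₀ q 1 1
    simp only [pow_one, cast_one] at this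
    rw [hp, mul_assoc, this]; congr 2; field_simp
  have hpow : p ^ (r ^ k) * (m : ℝ) ^ r = (1 / 2) ^ (r ^ k) * M := by
    rw [hp, mul_pow, mul_assoc, Real.rpow_neg_one_div_pow_mul_pow hm₀]
    congr 2; push_cast; field_simp; linarith
  have hchoose : (m.choose r : ℝ) ≤ (m : ℝ) ^ r := by exact_mod_cast choose_le_pow m r
  calc p * m - (k ! : ℝ) ^ r * p ^ (r ^ k) * (m.choose r : ℝ)
      ≥ 1 / 2 * M - (k ! : ℝ) ^ r * (p ^ (r ^ k) * (m : ℝ) ^ r) := by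
        rw [hpm, mul_assoc]; gcongr; rw [hp]; positivity
    _ = 1 / 2 * M - (k ! : ℝ) ^ r * (1 / 2) ^ (r ^ k) * M := by rw [hpow]; ring
    _ ≥ 1 / 4 * M := by
        nlinarith [factorial_pow_mul_half_pow_le hr (by omega : 1 ≤ k),
          Real.rpow_nonneg hm₀.le (((q : ℝ) - 1) / q)]
end
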